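/- arXiv:1203.0360 — 8 statements merged into one kernel-verified Lean document; each statement's English description precedes it below -/
import Mathlib

section
/- Let N be a positive integer, m an integer with 0 ≤ m ≤ N, and D_m = y(1+y)d²/dy² + [1-(N-1)y]d/dy + m(N-m). There exists a unique formal power series P_m over ℚ with D_m P_m = 0 and P_m(0) = 1, and P_m is a polynomial of degree exactly min(m, N-m). -/
/-! Comparing coefficients, `D_m u = 0` says `(j+1)² u_{j+1} = -(m-j)(N-m-j) u_j`, so a solution is
determined by `u(0)`, its coefficients being `u(0)` times partial products of these ratios. The
ratio is nonzero for `j < min(m, N-m)` and vanishes at `j = min(m, N-m)`, which cuts the series off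
there. -/

open PowerSeries

/-- The differential operator `D_m = y(1+y) d²/dy² + [1-(N-1)y] d/dy + m(N-m)`
acting on formal power series over `ℚ`. -/
noncomputable def Dop (N m : ℕ) (u : PowerSeries ℚ) : PowerSeries ℚ :=
  (PowerSeries.X * (1 + PowerSeries.X)) *
      (PowerSeries.derivative ℚ (PowerSeries.derivative ℚ u))
    + (1 - PowerSeries.C ((N : ℚ) - 1) * PowerSeries.X) * (PowerSeries.derivative ℚ u)
    + PowerSeries.C ((m : ℚ) * ((N : ℚ) - (m : ℚ))) * u

open Finset

theorem PowerSeries.coeff_eq_prod_mul_constantCoeff {R : Type*} [CommSemiring R]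
    (r : ℕ → R) {u : R⟦X⟧} (h : ∀ j, coeff (j + 1) u = r j * coeff j u) (j : ℕ) :
    coeff j u = (∏ i ∈ range j, r i) * constantCoeff u := by
  induction j with
  | zero => simp
  | succ j ih => rw [h, ih, prod_range_succ]; ring

theorem coeff_Dop (N m : ℕ) (u : ℚ⟦X⟧) (j : ℕ) :
    coeff j (Dop N m u) =
      ((j : ℚ) + 1) ^ 2 * coeff (j + 1) u + ((m : ℚ) - j) * ((N : ℚ) - m - j) * coeff j u := by
  rcases j with _ | _ | j <;>
    simp only [Dop, mul_add, add_mul, sub_mul, one_mul, mul_assoc, map_add, map_sub,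
      coeff_C_mul, coeff_derivative, coeff_succ_X_mul, coeff_zero_X_mul] <;>
    push_cast <;> ring

def solRatio (N m j : ℕ) : ℚ := -(((m : ℚ) - j) * ((N : ℚ) - m - j)) / ((j : ℚ) + 1) ^ 2

theorem Dop_eq_zero_iff (N m : ℕ) (u : ℚ⟦X⟧) :
    Dop N m u = 0 ↔ ∀ j, coeff (j + 1) u = solRatio N m j * coeff j u := by
  have hsq (j : ℕ) : ((j : ℚ) + 1) ^ 2 ≠ 0 := by positivity
  simp only [PowerSeries.ext_iff, coeff_Dop, map_zero, solRatio]
  refine forall_congr' fun j => ?_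
  rw [div_mul_eq_mul_div, eq_div_iff (hsq j)]
  constructor <;> intro h <;> linarith

noncomputable def Psol (N m : ℕ) : ℚ⟦X⟧ := mk fun j => ∏ i ∈ range j, solRatio N m i

theorem Dop_eq_zero_and_constantCoeff_eq_one_iff (N m : ℕ) (P : ℚ⟦X⟧) :
    Dop N m P = 0 ∧ constantCoeff P = 1 ↔ P = Psol N m := by
  constructor
  · rintro ⟨hD, hC⟩
    ext j
    rw [coeff_eq_prod_mul_constantCoeff _ ((Dop_eq_zero_iff N m P).1 hD), hC, mul_one, Psol,
      coeff_mk]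
  · rintro rfl
    refine ⟨(Dop_eq_zero_iff N m _).2 fun j => ?_, by simp [Psol]⟩
    simp only [Psol, coeff_mk, prod_range_succ, mul_comm]

theorem solRatio_min_eq_zero {N m : ℕ} (hm : m ≤ N) : solRatio N m (min m (N - m)) = 0 := by
  rcases min_cases m (N - m) with ⟨h, _⟩ | ⟨h, _⟩ <;> simp [solRatio, h, Nat.cast_sub hm]

theorem solRatio_ne_zero {N m j : ℕ} (hm : m ≤ N) (hj : j < min m (N - m)) :
    solRatio N m j ≠ 0 := by
  have hjm : (j : ℚ) < m := by exact_mod_cast (lt_min_iff.1 hj).1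
  have hjN : (j : ℚ) < N - m := by
    rw [← Nat.cast_sub hm]; exact_mod_cast (lt_min_iff.1 hj).2
  have hnum : ((m : ℚ) - j) * ((N : ℚ) - m - j) ≠ 0 := by
    apply mul_ne_zero <;> linarith
  exact div_ne_zero (neg_ne_zero.2 hnum) (by positivity)

theorem exists_unique_Pm_general (N m : ℕ) (hm : m ≤ N) :
    (∃! P : PowerSeries ℚ, Dop N m P = 0 ∧ PowerSeries.constantCoeff P = 1) ∧
      ∀ P : PowerSeries ℚ, Dop N m P = 0 → PowerSeries.constantCoeff P = 1 →
        (∀ j : ℕ, min m (N - m) < j → PowerSeries.coeff j P = 0) ∧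
          PowerSeries.coeff (min m (N - m)) P ≠ 0 := by
  have hsol := Dop_eq_zero_and_constantCoeff_eq_one_iff N m
  refine ⟨⟨Psol N m, (hsol _).2 rfl, fun P hP => (hsol P).1 hP⟩, fun P hD hC => ?_⟩
  obtain rfl := (hsol P).1 ⟨hD, hC⟩
  simp only [Psol, coeff_mk]
  refine ⟨fun j hj => prod_eq_zero (mem_range.2 hj) (solRatio_min_eq_zero hm), ?_⟩
  exact prod_ne_zero_iff.2 fun i hi => solRatio_ne_zero hm (mem_range.1 hi)

/-- There is a unique formal power series `P_m` with `D_m P_m = 0` and `P_m(0) = 1`,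
and every such series is a polynomial of degree exactly `min(m, N-m)`. -/
theorem exists_unique_Pm (N m : ℕ) (hN : 0 < N) (hm : m ≤ N) :
    (∃! P : PowerSeries ℚ, Dop N m P = 0 ∧ PowerSeries.constantCoeff P = 1) ∧
      ∀ P : PowerSeries ℚ, Dop N m P = 0 → PowerSeries.constantCoeff P = 1 →
        (∀ j : ℕ, min m (N - m) < j → PowerSeries.coeff j P = 0) ∧
          PowerSeries.coeff (min m (N - m)) P ≠ 0 :=
  exists_unique_Pm_general N m hm
end

section
/- Let x_1, x_2, ... be noncommuting indeterminates commuting with the variable s, and set X(s) = ∑_{N≥0} x_{N+1} s^N. For k ∈ ℤ define the operator L_k = s d²/ds² − k d/ds + X(s), acting on (noncommutative-coefficient) formal power series in s, where X(s) acts by left multiplication. Then for every N ≥ 1, evaluating at s = 0: L_{1−N} L_{3−N} ⋯ L_{N−3} L_{N−1} 1 |_{s=0} = ∑_{|I|=N} n̄_I · x_{I_1} x_{I_2} ⋯ x_{I_r}, where the sum runs over all compositions I = (I_1,...,I_r) of N, and n̄_I = (N−1)!² / ∏_{k=1}^{r−1} ((∑_{j=1}^k I_j)(∑_{j=k+1}^r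 I_j)). -/
/-!
Write `φ(T) = T(T - N)` and `P_m = ∏_{T<m} (X - φ(T))`. After the first `m` operators have been
applied to `1`, the coefficient of `s^j` is a combination of the words `x_I` over compositions
`I = (I_1, …, I_r)` of `m + j`, and the coefficient of `x_I` is the divided difference of `P_m` at
the nodes `φ(0), φ(I_r), φ(I_{r-1} + I_r), …, φ(I_1 + ⋯ + I_r)`. Indeed `L_{N-1-2m}` multiplies
`s^{j+1}` by `φ(m+j+1) - φ(m)`, so one more operator is exactly the Leibniz rule for
`P_{m+1} = (X - φ(m)) P_m`, while `X(s)` prepends a block to `I`. For `m = N`, `j = 0` all nodes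
but the last one, `φ(N) = 0`, are roots of `P_N`, so the divided difference is the cofactor at `0`:
`(N-1)!²` divided by the product of `T(N - T)` over the proper suffix sums `T` of `I`, i.e. `n̄_I`.
-/

open Finset

/-- The operator `L_k = s d²/ds² - k d/ds + X(s)`, with `X(s) = ∑_{a≥1} x_a s^{a-1}` acting by
left multiplication, expressed on coefficient sequences of formal power series in a central
variable `s` over the free algebra `ℚ⟨x_1, x_2, ...⟩`.  If `u = ∑ u_j s^j` then
`(L_k u)_j = (j(j+1) - k(j+1)) u_{j+1} + ∑_{i=0}^{j} x_{i+1} u_{j-i}`. -/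
noncomputable def Lop (k : ℤ) (u : ℕ → FreeAlgebra ℚ ℕ) : ℕ → FreeAlgebra ℚ ℕ :=
  fun j => (((j : ℚ) * ((j : ℚ) + 1) - (k : ℚ) * ((j : ℚ) + 1))) • u (j + 1)
    + ∑ i ∈ Finset.range (j + 1), FreeAlgebra.ι ℚ (i + 1) * u (j - i)

/-- The constant `n̄_I = (N-1)!² / ∏_{k=1}^{r-1} (∑_{j≤k} I_j)(∑_{j>k} I_j)`. -/
noncomputable def nbar (N : ℕ) (I : List ℕ) : ℚ :=
  ((Nat.factorial (N - 1) : ℚ))^2 /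
    ∏ k ∈ Finset.range (I.length - 1), (((I.take (k+1)).sum : ℚ) * ((I.drop (k+1)).sum : ℚ))

open Polynomial

namespace Polynomial

variable {R : Type*} [CommRing R]

theorem X_sub_C_mul_divByMonic_X_sub_C (x : R) (f : R[X]) :
    (X - C x) * (f /ₘ (X - C x)) = f - C (f.eval x) := by
  rw [X_sub_C_mul_divByMonic_eq_sub_modByMonic, modByMonic_X_sub_C_eq_C_eval]

theorem divByMonic_X_sub_C_eq_of_mul_eq {x : R} {f q : R[X]}
    (h : (X - C x) * q = f - C (f.eval x)) : f /ₘ (X - C x) = q :=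
  (monic_X_sub_C x).isRegular.left ((X_sub_C_mul_divByMonic_X_sub_C x f).trans h.symm)

theorem add_divByMonic_X_sub_C (x : R) (f g : R[X]) :
    (f + g) /ₘ (X - C x) = f /ₘ (X - C x) + g /ₘ (X - C x) :=
  divByMonic_X_sub_C_eq_of_mul_eq <| by
    rw [mul_add, X_sub_C_mul_divByMonic_X_sub_C, X_sub_C_mul_divByMonic_X_sub_C, eval_add,
      C_add]
    ring

/-- Divided difference `f[x₀, …, xₙ]`, computed by repeated division by `X - C xᵢ`; the nodes
need not be distinct. -/
noncomputable def divDiff : List R → R[X] → R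
  | [], _ => 0
  | [x], f => f.eval x
  | x :: y :: xs, f => divDiff (y :: xs) (f /ₘ (X - C x))

@[simp] theorem divDiff_nil (f : R[X]) : divDiff [] f = 0 := rfl

@[simp] theorem divDiff_singleton (x : R) (f : R[X]) : divDiff [x] f = f.eval x := rfl

theorem divDiff_cons {xs : List R} (hxs : xs ≠ []) (x : R) (f : R[X]) :
    divDiff (x :: xs) f = divDiff xs (f /ₘ (X - C x)) := by
  obtain ⟨y, ys, rfl⟩ := List.exists_cons_of_ne_nil hxs
  rfl

theorem divDiff_add : ∀ (xs : List R) (f g : R[X]), divDiff xs (f + g) = divDiff xs f + divDiff xs g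
  | [], _, _ => by simp
  | [_], _, _ => by simp
  | x :: y :: xs, f, g => by
    simp only [divDiff_cons (List.cons_ne_nil y xs), add_divByMonic_X_sub_C, divDiff_add]

theorem divDiff_C : ∀ (xs : List R) (a : R), divDiff xs (C a) = if xs.length = 1 then a else 0
  | [], _ => by simp
  | [_], _ => by simp
  | x :: y :: xs, a => by
    have hq : C a /ₘ (X - C x) = C 0 := divByMonic_X_sub_C_eq_of_mul_eq (by simp)
    rw [divDiff_cons (List.cons_ne_nil y xs), hq, divDiff_C]
    simp

theorem divDiff_append_singleton_X_sub_C_mul : ∀ (xs : List R) (x c : R) (g : R[X]),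
    divDiff (xs ++ [x]) ((X - C c) * g) = (x - c) * divDiff (xs ++ [x]) g + divDiff xs g
  | [], x, c, g => by simp
  | z :: xs, x, c, g => by
    have hdiv : ((X - C c) * g) /ₘ (X - C z) = (X - C c) * (g /ₘ (X - C z)) + C (g.eval z) :=
      divByMonic_X_sub_C_eq_of_mul_eq <| by
        rw [eval_mul, C_mul, mul_add, mul_left_comm, X_sub_C_mul_divByMonic_X_sub_C]
        simp only [eval_sub, eval_X, eval_C, C_sub]
        ring
    have hne : xs ++ [x] ≠ [] := by simp
    rw [List.cons_append, divDiff_cons hne, divDiff_cons hne, hdiv, divDiff_add, divDiff_C,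
      divDiff_append_singleton_X_sub_C_mul]
    rcases xs with _ | ⟨w, ws⟩
    · simp
    · simp [divDiff_cons (List.cons_ne_nil w ws)]

theorem divDiff_append_singleton_mul_prod : ∀ (xs : List R) (x : R) (g : R[X]),
    divDiff (xs ++ [x]) (g * (xs.map fun y => X - C y).prod) = g.eval x
  | [], x, g => by simp
  | z :: xs, x, g => by
    have hdiv : (g * ((z :: xs).map fun y => X - C y).prod) /ₘ (X - C z)
        = g * (xs.map fun y => X - C y).prod :=
      divByMonic_X_sub_C_eq_of_mul_eq <| by simp only [List.map_cons, List.prod_cons]; simp; ring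
    rw [List.cons_append, divDiff_cons (by simp), hdiv, divDiff_append_singleton_mul_prod]

theorem divDiff_mul_prod_eq_zero {xs : List R} (hxs : xs ≠ []) (g : R[X]) :
    divDiff xs (g * (xs.map fun y => X - C y).prod) = 0 := by
  obtain ⟨ys, y, rfl⟩ : ∃ ys y, xs = ys ++ [y] := ⟨_, _, (List.dropLast_append_getLast hxs).symm⟩
  rw [List.map_append, List.prod_append, List.map_singleton, List.prod_singleton,
    mul_comm _ (X - C y), ← mul_assoc, divDiff_append_singleton_mul_prod]
  simp

end Polynomial

namespace Composition

def blocksFinset (n : ℕ) : Finset (List ℕ) :=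
  (Finset.univ : Finset (Composition n)).map ⟨blocks, fun _ _ => Composition.ext⟩

theorem mem_blocksFinset {n : ℕ} {l : List ℕ} :
    l ∈ blocksFinset n ↔ (∀ x ∈ l, 0 < x) ∧ l.sum = n := by
  simp only [blocksFinset, Finset.mem_map, Finset.mem_univ, true_and]
  exact ⟨fun ⟨c, hc⟩ => hc ▸ ⟨fun _ => c.blocks_pos, c.blocks_sum⟩,
    fun ⟨hpos, hsum⟩ => ⟨⟨l, hpos _, hsum⟩, rfl⟩⟩

theorem sum_blocks_eq_sum_blocksFinset {M : Type*} [AddCommMonoid M] (n : ℕ)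
    (F : List ℕ → M) : ∑ c : Composition n, F c.blocks = ∑ l ∈ blocksFinset n, F l := by
  rw [blocksFinset, Finset.sum_map]
  rfl

theorem sum_blocks_zero {M : Type*} [AddCommMonoid M] (F : List ℕ → M) :
    ∑ c : Composition 0, F c.blocks = F [] := by
  simp [fun c : Composition 0 => c.blocks_eq_nil.2 rfl, composition_card]

theorem sum_blocks_succ {M : Type*} [AddCommMonoid M] (n : ℕ) (F : List ℕ → M) :
    ∑ c : Composition (n + 1), F c.blocks
      = ∑ a ∈ range (n + 1), ∑ c : Composition (n - a), F ((a + 1) :: c.blocks) := by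
  rw [sum_blocks_eq_sum_blocksFinset,
    Finset.sum_congr rfl fun a _ =>
      sum_blocks_eq_sum_blocksFinset (n - a) fun l => F ((a + 1) :: l),
    Finset.sum_sigma']
  have head_pos : ∀ l ∈ blocksFinset (n + 1), ∃ b t, 0 < b ∧ l = b :: t := by
    rintro (_ | ⟨b, t⟩) hl <;> rw [mem_blocksFinset] at hl
    · simp at hl
    · exact ⟨b, t, hl.1 b List.mem_cons_self, rfl⟩
  refine Finset.sum_nbij' (fun l => ⟨l.headI - 1, l.tail⟩) (fun p => (p.1 + 1) :: p.2)
    ?_ ?_ ?_ ?_ ?_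
  · intro l hl
    obtain ⟨b, t, hb, rfl⟩ := head_pos l hl
    simp_all [mem_blocksFinset]
    omega
  · rintro ⟨a, t⟩ h
    simp_all [mem_blocksFinset]
    omega
  · intro l hl
    obtain ⟨b, t, hb, rfl⟩ := head_pos l hl
    simp
    omega
  · rintro ⟨a, t⟩ -
    simp
  · intro l hl
    obtain ⟨b, t, hb, rfl⟩ := head_pos l hl
    simp [Nat.sub_add_cancel hb]

end Composition

namespace List

def tailSums : List ℕ → List ℕ
  | [] => []
  | a :: l => tailSums l ++ [a + l.sum]

theorem length_tailSums : ∀ l : List ℕ, (tailSums l).length = l.length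
  | [] => rfl
  | a :: l => by simp [tailSums, length_tailSums l]

theorem le_sum_of_mem_tailSums : ∀ {l : List ℕ} {T : ℕ}, T ∈ tailSums l → T ≤ l.sum
  | [], _, h => by simp [tailSums] at h
  | a :: l, T, h => by
    rw [tailSums, mem_append, mem_singleton] at h
    rcases h with h | rfl
    · have := le_sum_of_mem_tailSums h
      simp only [sum_cons]
      omega
    · simp

theorem pos_of_mem_tailSums : ∀ {l : List ℕ}, (∀ x ∈ l, 0 < x) → ∀ {T : ℕ}, T ∈ tailSums l → 0 < T
  | [], _, _, h => by simp [tailSums] at h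
  | a :: l, hpos, T, h => by
    rw [tailSums, mem_append, mem_singleton] at h
    rcases h with h | rfl
    · exact pos_of_mem_tailSums (fun x hx => hpos x (mem_cons_of_mem a hx)) h
    · have := hpos a mem_cons_self
      omega

theorem nodup_zero_cons_tailSums : ∀ {l : List ℕ}, (∀ x ∈ l, 0 < x) → (0 :: tailSums l).Nodup
  | [], _ => by simp [tailSums]
  | a :: l, hpos => by
    have ha := hpos a mem_cons_self
    rw [tailSums, ← cons_append, nodup_append]
    refine ⟨nodup_zero_cons_tailSums fun x hx => hpos x (mem_cons_of_mem a hx),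
      nodup_singleton _, ?_⟩
    simp only [mem_cons, not_mem_nil, or_false]
    rintro T (rfl | hT) _ rfl
    · omega
    · have := le_sum_of_mem_tailSums hT
      omega

theorem prod_sum_take_mul_sum_drop : ∀ (a : ℕ) (l : List ℕ),
    ∏ k ∈ Finset.range l.length,
        ((((a :: l).take (k + 1)).sum : ℚ) * (((a :: l).drop (k + 1)).sum : ℚ))
      = ((tailSums l).map fun T : ℕ => (((a + l.sum : ℕ) : ℚ) - T) * T).prod
  | _, [] => by simp [tailSums]
  | a, b :: l => by
    have ih := prod_sum_take_mul_sum_drop (a + b) l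
    simp only [take_succ_cons, drop_succ_cons, sum_cons] at ih ⊢
    rw [length_cons, Finset.prod_range_succ', tailSums, map_append, prod_append]
    simp only [take_succ_cons, drop_succ_cons, take_zero, drop_zero,
      sum_cons, sum_nil, map_singleton, prod_singleton, ← add_assoc, ← ih]
    push_cast
    ring

end List

theorem prod_erase_zero_range_sub_mul (N : ℕ) :
    ∏ T ∈ (range N).erase 0, ((N : ℚ) - T) * T = ((N - 1).factorial : ℚ) ^ 2 := by
  rcases N with _ | n
  · simp
  have h_desc : ∏ k ∈ range n, ((n : ℚ) - k) = n.factorial := by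
    rw [← Nat.descFactorial_self, Nat.descFactorial_eq_prod_range, Nat.cast_prod]
    exact Finset.prod_congr rfl fun k hk => by rw [Nat.cast_sub (Finset.mem_range.1 hk).le]
  have h_asc : ∏ k ∈ range n, ((k : ℚ) + 1) = n.factorial := by
    exact_mod_cast Finset.prod_range_add_one_eq_factorial n
  rw [range_add_one', Finset.erase_insert (by simp), Finset.prod_map, Nat.add_sub_cancel, sq]
  nth_rw 1 [← h_desc]
  rw [← h_asc, ← Finset.prod_mul_distrib]
  refine Finset.prod_congr rfl fun k _ => ?_
  change (((n + 1 : ℕ) : ℚ) - ((k + 1 : ℕ) : ℚ)) * ((k + 1 : ℕ) : ℚ) = _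
  push_cast
  ring

namespace Lop

def nodeAt (N T : ℕ) : ℚ := T * ((T : ℚ) - N)

noncomputable def rootPoly (N m : ℕ) : ℚ[X] := ∏ T ∈ range m, (X - C (nodeAt N T))

noncomputable def wordCoeff (N m : ℕ) (l : List ℕ) : ℚ :=
  divDiff ((0 :: l.tailSums).map (nodeAt N)) (rootPoly N m)

theorem rootPoly_eq_mul_prod (N : ℕ) {m : ℕ} {P : List ℕ} (hP : P.Nodup) (hlt : ∀ T ∈ P, T < m) :
    rootPoly N m = (∏ T ∈ range m \ P.toFinset, (X - C (nodeAt N T)))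
      * ((P.map (nodeAt N)).map fun y => X - C y).prod := by
  have hsub : P.toFinset ⊆ range m := fun T hT =>
    Finset.mem_range.2 (hlt T (List.mem_toFinset.1 hT))
  rw [rootPoly, ← Finset.prod_sdiff hsub, List.prod_toFinset _ hP, List.map_map]
  rfl

theorem wordCoeff_zero (N : ℕ) (l : List ℕ) : wordCoeff N 0 l = if l = [] then 1 else 0 := by
  rw [wordCoeff, rootPoly, Finset.prod_range_zero, ← C_1, divDiff_C]
  simp [List.length_tailSums]

theorem wordCoeff_succ_cons (N m a : ℕ) (l : List ℕ) :
    wordCoeff N (m + 1) (a :: l)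
      = (nodeAt N (a + l.sum) - nodeAt N m) * wordCoeff N m (a :: l) + wordCoeff N m l := by
  have hnodes : (0 :: (a :: l).tailSums).map (nodeAt N)
      = (0 :: l.tailSums).map (nodeAt N) ++ [nodeAt N (a + l.sum)] := by
    simp [List.tailSums]
  rw [wordCoeff, wordCoeff, wordCoeff, rootPoly, Finset.prod_range_succ, mul_comm, ← rootPoly,
    hnodes, divDiff_append_singleton_X_sub_C_mul]

theorem wordCoeff_eq_zero_of_sum_lt (N : ℕ) {m : ℕ} {l : List ℕ} (hpos : ∀ x ∈ l, 0 < x)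
    (hlt : l.sum < m) : wordCoeff N m l = 0 := by
  have hroots : ∀ T ∈ 0 :: l.tailSums, T < m := by
    rintro T (_ | ⟨_, hT⟩)
    · omega
    · have := List.le_sum_of_mem_tailSums hT
      omega
  rw [wordCoeff, rootPoly_eq_mul_prod N (List.nodup_zero_cons_tailSums hpos) hroots]
  exact divDiff_mul_prod_eq_zero (by simp) _

theorem wordCoeff_self_cons {N a : ℕ} {l : List ℕ} (hpos : ∀ x ∈ a :: l, 0 < x)
    (hsum : a + l.sum = N) :
    wordCoeff N N (a :: l) = ∏ T ∈ (range N).erase 0 \ l.tailSums.toFinset, ((N : ℚ) - T) * T := by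
  have ha : 0 < a := hpos a List.mem_cons_self
  have hroots : ∀ T ∈ 0 :: l.tailSums, T < N := by
    rintro T (_ | ⟨_, hT⟩)
    · omega
    · have := List.le_sum_of_mem_tailSums hT
      omega
  have hnodes : (0 :: (a :: l).tailSums).map (nodeAt N)
      = (0 :: l.tailSums).map (nodeAt N) ++ [nodeAt N N] := by
    simp [List.tailSums, hsum]
  rw [wordCoeff, hnodes, rootPoly_eq_mul_prod N
      (List.nodup_zero_cons_tailSums fun x hx => hpos x (List.mem_cons_of_mem a hx)) hroots,
    divDiff_append_singleton_mul_prod, eval_prod, List.toFinset_cons, Finset.sdiff_insert,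
    ← Finset.erase_sdiff_comm]
  refine Finset.prod_congr rfl fun T _ => ?_
  simp only [eval_sub, eval_X, eval_C, nodeAt]
  ring

theorem nbar_cons {N a : ℕ} {l : List ℕ} (hpos : ∀ x ∈ a :: l, 0 < x) (hsum : a + l.sum = N) :
    nbar N (a :: l) = ∏ T ∈ (range N).erase 0 \ l.tailSums.toFinset, ((N : ℚ) - T) * T := by
  have hpos' : ∀ x ∈ l, 0 < x := fun x hx => hpos x (List.mem_cons_of_mem a hx)
  have hbounds : ∀ T ∈ l.tailSums.toFinset, 0 < T ∧ T < N := fun T hT => by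
    have := hpos a List.mem_cons_self
    have := List.le_sum_of_mem_tailSums (List.mem_toFinset.1 hT)
    exact ⟨List.pos_of_mem_tailSums hpos' (List.mem_toFinset.1 hT), by omega⟩
  have hsub : l.tailSums.toFinset ⊆ (range N).erase 0 := fun T hT => by
    have := hbounds T hT
    simp only [Finset.mem_erase, Finset.mem_range]
    omega
  have hden : ∏ k ∈ range ((a :: l).length - 1),
      ((((a :: l).take (k + 1)).sum : ℚ) * (((a :: l).drop (k + 1)).sum : ℚ))
        = ∏ T ∈ l.tailSums.toFinset, ((N : ℚ) - T) * T := by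
    rw [List.length_cons, Nat.add_sub_cancel, List.prod_sum_take_mul_sum_drop, hsum,
      List.prod_toFinset _ (List.nodup_cons.1 (List.nodup_zero_cons_tailSums hpos')).2]
  have hden_ne : ∏ T ∈ l.tailSums.toFinset, ((N : ℚ) - T) * T ≠ 0 :=
    Finset.prod_ne_zero_iff.2 fun T hT => by
      obtain ⟨hT0, hTN⟩ := hbounds T hT
      exact mul_ne_zero (sub_ne_zero.2 (by exact_mod_cast hTN.ne')) (by exact_mod_cast hT0.ne')
  rw [nbar, hden, ← prod_erase_zero_range_sub_mul, ← Finset.prod_sdiff hsub,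
    mul_div_cancel_right₀ _ hden_ne]

theorem wordCoeff_self {N : ℕ} {l : List ℕ} (hpos : ∀ x ∈ l, 0 < x) (hsum : l.sum = N) :
    wordCoeff N N l = nbar N l := by
  rcases l with _ | ⟨a, l⟩
  · subst hsum
    simp [wordCoeff, rootPoly, List.tailSums, nbar]
  · rw [List.sum_cons] at hsum
    rw [wordCoeff_self_cons hpos hsum, nbar_cons hpos hsum]

noncomputable def wordSum (N m n : ℕ) : FreeAlgebra ℚ ℕ :=
  ∑ c : Composition n, wordCoeff N m c.blocks • (c.blocks.map (FreeAlgebra.ι ℚ)).prod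

theorem wordSum_zero_left (N n : ℕ) : wordSum N 0 n = if n = 0 then 1 else 0 := by
  rcases n with _ | n
  · rw [wordSum,
      Composition.sum_blocks_zero fun l => wordCoeff N 0 l • (l.map (FreeAlgebra.ι ℚ)).prod,
      wordCoeff_zero]
    simp
  · refine Finset.sum_eq_zero fun c _ => ?_
    rw [wordCoeff_zero, if_neg (by simp [c.blocks_eq_nil]), zero_smul]

theorem wordSum_eq_zero_of_lt (N : ℕ) {m n : ℕ} (h : n < m) : wordSum N m n = 0 :=
  Finset.sum_eq_zero fun c _ => by
    rw [wordCoeff_eq_zero_of_sum_lt N (fun _ => c.blocks_pos) (by rwa [c.blocks_sum]), zero_smul]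

theorem wordSum_succ (N m n : ℕ) :
    wordSum N (m + 1) (n + 1) = (nodeAt N (n + 1) - nodeAt N m) • wordSum N m (n + 1)
      + ∑ a ∈ range (n + 1), FreeAlgebra.ι ℚ (a + 1) * wordSum N m (n - a) := by
  simp only [wordSum]
  rw [Composition.sum_blocks_succ n fun l => wordCoeff N (m + 1) l • (l.map (FreeAlgebra.ι ℚ)).prod,
    Composition.sum_blocks_succ n fun l => wordCoeff N m l • (l.map (FreeAlgebra.ι ℚ)).prod,
    Finset.smul_sum, ← Finset.sum_add_distrib]
  refine Finset.sum_congr rfl fun a ha => ?_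
  rw [Finset.smul_sum, Finset.mul_sum, ← Finset.sum_add_distrib]
  refine Finset.sum_congr rfl fun c _ => ?_
  have hsum : a + 1 + c.blocks.sum = n + 1 := by
    rw [c.blocks_sum]
    have := Finset.mem_range.1 ha
    omega
  rw [wordCoeff_succ_cons, hsum, List.map_cons, List.prod_cons, add_smul, mul_smul,
    mul_smul_comm]

theorem apply_wordSum (N m : ℕ) :
    Lop ((N : ℤ) - 1 - 2 * (m : ℤ)) (fun j => wordSum N m (m + j))
      = fun j => wordSum N (m + 1) (m + 1 + j) := by
  funext j
  have hscalar : (j : ℚ) * ((j : ℚ) + 1) - (((N : ℤ) - 1 - 2 * (m : ℤ) : ℤ) : ℚ) * ((j : ℚ) + 1)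
      = nodeAt N (m + j + 1) - nodeAt N m := by
    simp only [nodeAt]
    push_cast
    ring
  have htail : ∑ a ∈ range (m + j + 1), FreeAlgebra.ι ℚ (a + 1) * wordSum N m (m + j - a)
      = ∑ i ∈ range (j + 1), FreeAlgebra.ι ℚ (i + 1) * wordSum N m (m + (j - i)) := by
    have hvanish : ∀ a ∈ range (m + j + 1), a ∉ range (j + 1) →
        FreeAlgebra.ι ℚ (a + 1) * wordSum N m (m + j - a) = 0 := fun a ha hna => by
      simp only [Finset.mem_range, not_lt] at ha hna
      rw [wordSum_eq_zero_of_lt N (by omega), mul_zero]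
    rw [← Finset.sum_subset (Finset.range_subset_range.2 (by omega)) hvanish]
    refine Finset.sum_congr rfl fun i hi => ?_
    rw [Nat.add_sub_assoc (by simpa [Nat.lt_succ_iff] using hi)]
  rw [show m + 1 + j = m + j + 1 by omega, wordSum_succ, htail, Lop, hscalar,
    show m + j + 1 = m + (j + 1) by omega]

theorem foldl_range_eq_wordSum (N m : ℕ) :
    (List.range m).foldl (fun u i => Lop ((N : ℤ) - 1 - 2 * (i : ℤ)) u)
      (fun j => if j = 0 then 1 else 0) = fun j => wordSum N m (m + j) := by
  -- `List.range m` is elaborated as a `List ℤ` through a monadic coercion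
  simp only [bind_pure_comp, List.map_eq_map]
  induction m with
  | zero => simp [wordSum_zero_left]
  | succ m ih =>
    rw [List.range_succ, List.map_append, List.foldl_append, ih, List.map_singleton,
      List.foldl_cons, List.foldl_nil, apply_wordSum]

end Lop

theorem Lop_iterate_one_general (N : ℕ) :
    ((List.range N).foldl (fun u i => Lop ((N : ℤ) - 1 - 2 * (i : ℤ)) u)
        (fun j => if j = 0 then 1 else 0)) 0
      = ∑ c : Composition N, nbar N c.blocks • (c.blocks.map (FreeAlgebra.ι ℚ)).prod := by
  simp only [Lop.foldl_range_eq_wordSum, Nat.add_zero, Lop.wordSum]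
  exact Finset.sum_congr rfl fun c _ => by
    rw [Lop.wordCoeff_self (fun _ => c.blocks_pos) c.blocks_sum]

/-- Theorem `combthm`:
`L_{1-N} L_{3-N} ⋯ L_{N-3} L_{N-1} 1 |_{s=0} = ∑_{|I|=N} n̄_I x_{I_1} ⋯ x_{I_r}`,
the sum being over all compositions `I` of `N`. -/
theorem Lop_iterate_one (N : ℕ) (hN : 1 ≤ N) :
    ((List.range N).foldl (fun u i => Lop ((N : ℤ) - 1 - 2 * (i : ℤ)) u)
        (fun j => if j = 0 then 1 else 0)) 0
      = ∑ c : Composition N, nbar N c.blocks • (c.blocks.map (FreeAlgebra.ι ℚ)).prod :=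
  Lop_iterate_one_general N
end

section
/- Krattenthaler's identity (specialized case X = Y = −b): Let s ≥ 1, K_1, ..., K_s positive integers, and b a rational (or formal) parameter such that all denominators below are nonzero. For each subset A = {a_1 < ⋯ < a_{r−1}} of {1,...,s−1} (including the empty set, giving r = 1), define the compositions J_1 = (K_1,...,K_{a_1}), J_2 = (K_{a_1+1},...,K_{a_2}), ..., J_r = (K_{a_{r−1}+1},...,K_s), and I = (|J_1|,...,|J_r|). Then ∑_{A ⊆ {1,...,s−1}} (−1)^r I_1 ⋯ I_r · (∏_{a∈A}(K_a + K_{a+1})) / (∏_{i=1}^{r−1} (∑_{k=1}^i I_k)(∑_{k=i+1}^r I_k + b)) = −b|K| / (|K| − K_1 + b), where |K| = K_1 + ⋯ + K_s. -/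
/-!
Group the subsets `A` by their largest element `a`. The summand for `insert a A` is an explicit
factor times the summand for `A` with `s` replaced by `a` and `b` by `b + K_{a+1} + ⋯ + K_s`, so by
strong induction on `s` each group sums to `(K_{a+1} + ⋯ + K_s)(K_a + K_{a+1}) / (|K| - K_1 + b)`.
These numerators telescope to `|K| (|K| - K_1)`, and adding the summand `-|K|` of `A = ∅` gives the
right-hand side.
-/

open Finset

/-- Block boundaries `0 = p_0 < p_1 < ⋯ < p_{r-1} < p_r = s` determined by a subset
`A = {a_1 < ⋯ < a_{r-1}} ⊆ {1, ..., s-1}` of splitting positions. -/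
def bnds (s : ℕ) (A : Finset ℕ) : List ℕ := 0 :: (A.sort (· ≤ ·) ++ [s])

/-- `I_i = |J_i| = K_{p_{i-1}+1} + ⋯ + K_{p_i}`, the sum of the `i`-th block of
`(K_1, ..., K_s)` split at the positions of `A` (for `1 ≤ i ≤ r = |A| + 1`). -/
def blockI (K : ℕ → ℕ) (s : ℕ) (A : Finset ℕ) (i : ℕ) : ℕ :=
  ∑ k ∈ Finset.Icc ((bnds s A).getD (i-1) 0 + 1) ((bnds s A).getD i 0), K k

theorem Finset.sort_insert_of_forall_lt {α : Type*} [LinearOrder α] {a : α} {A : Finset α}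
    (h : ∀ x ∈ A, x < a) : (insert a A).sort (· ≤ ·) = A.sort (· ≤ ·) ++ [a] := by
  refine (sortedLT_sort _).eq_of_mem_iff ?_ fun x => by simp [or_comm]
  rw [List.sortedLT_iff_pairwise, List.pairwise_append]
  exact ⟨(sortedLT_sort A).pairwise, List.pairwise_singleton _ _, by simpa using h⟩

theorem Finset.sum_powerset_Icc_one_eq_add_sum_max {M : Type*} [AddCommMonoid M] (n : ℕ)
    (f : Finset ℕ → M) :
    ∑ A ∈ (Icc 1 n).powerset, f A
      = f ∅ + ∑ a ∈ Icc 1 n, ∑ A ∈ (Icc 1 (a - 1)).powerset, f (insert a A) := by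
  induction n with
  | zero => simp
  | succ n ih =>
    rw [← insert_Icc_right_eq_Icc_add_one (by omega), sum_powerset_insert (by simp), ih,
      sum_insert (by simp), Nat.add_sub_cancel, add_assoc, add_comm (∑ a ∈ Icc 1 n, _)]

theorem Finset.sum_Icc_one_add_sum_Icc_succ {M : Type*} [AddCommMonoid M] (f : ℕ → M)
    {a s : ℕ} (h : a ≤ s) :
    ∑ k ∈ Icc 1 a, f k + ∑ k ∈ Icc (a + 1) s, f k = ∑ k ∈ Icc 1 s, f k := by
  simpa only [← Icc_add_one_left_eq_Ioc, zero_add] using sum_Ioc_consecutive f (Nat.zero_le a) h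

section Blocks

variable {a s : ℕ} {A : Finset ℕ}

theorem length_bnds (s : ℕ) (A : Finset ℕ) : (bnds s A).length = A.card + 2 := by
  simp [bnds]

theorem getD_bnds_card_add_one (s : ℕ) (A : Finset ℕ) : (bnds s A).getD (A.card + 1) 0 = s := by
  simp [bnds, List.getD_eq_getElem?_getD]

theorem bnds_insert_of_forall_lt (h : ∀ x ∈ A, x < a) :
    bnds s (insert a A) = bnds a A ++ [s] := by
  simp [bnds, sort_insert_of_forall_lt h]

theorem getD_bnds_insert_of_le (h : ∀ x ∈ A, x < a) {i : ℕ} (hi : i ≤ A.card + 1) :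
    (bnds s (insert a A)).getD i 0 = (bnds a A).getD i 0 := by
  rw [bnds_insert_of_forall_lt h, List.getD_append _ _ _ _ (by rw [length_bnds]; omega)]

theorem blockI_insert_of_le (K : ℕ → ℕ) (h : ∀ x ∈ A, x < a) {i : ℕ} (hi : i ≤ A.card + 1) :
    blockI K s (insert a A) i = blockI K a A i := by
  rw [blockI, blockI, getD_bnds_insert_of_le h hi, getD_bnds_insert_of_le h (by omega)]

theorem blockI_insert_card_add_two (K : ℕ → ℕ) (h : ∀ x ∈ A, x < a) :
    blockI K s (insert a A) (A.card + 2) = ∑ k ∈ Icc (a + 1) s, K k := by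
  have ha : a ∉ A := fun ha => (h a ha).false
  have htop := getD_bnds_card_add_one s (insert a A)
  rw [card_insert_of_notMem ha] at htop
  rw [blockI, show A.card + 2 - 1 = A.card + 1 from rfl, getD_bnds_insert_of_le h le_rfl,
    getD_bnds_card_add_one, htop]

theorem blockI_empty_one (K : ℕ → ℕ) (s : ℕ) : blockI K s ∅ 1 = ∑ k ∈ Icc 1 s, K k := by
  simp [blockI, bnds]

theorem prod_getD_bnds_insert {M : Type*} [CommMonoid M] (g : ℕ → M) (h : ∀ x ∈ A, x < a) :
    ∏ i ∈ Icc 1 (insert a A).card, g ((bnds s (insert a A)).getD i 0)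
      = (∏ i ∈ Icc 1 A.card, g ((bnds a A).getD i 0)) * g a := by
  rw [card_insert_of_notMem fun ha => (h a ha).false, prod_Icc_succ_top (by omega),
    getD_bnds_insert_of_le h le_rfl, getD_bnds_card_add_one]
  congr 1
  exact prod_congr rfl fun i hi => by rw [getD_bnds_insert_of_le h (by simp at hi; omega)]

theorem prod_blockI_insert {M : Type*} [CommMonoid M] (K : ℕ → ℕ) (g : ℕ → M)
    (h : ∀ x ∈ A, x < a) :
    ∏ i ∈ Icc 1 ((insert a A).card + 1), g (blockI K s (insert a A) i)
      = (∏ i ∈ Icc 1 (A.card + 1), g (blockI K a A i)) * g (∑ k ∈ Icc (a + 1) s, K k) := by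
  rw [card_insert_of_notMem fun ha => (h a ha).false, prod_Icc_succ_top (by omega),
    blockI_insert_card_add_two K h]
  congr 1
  exact prod_congr rfl fun i hi => by rw [blockI_insert_of_le K h (by simp at hi; omega)]

end Blocks

def krattenthalerTerm (K : ℕ → ℕ) (s : ℕ) (b : ℚ) (A : Finset ℕ) : ℚ :=
  (-1 : ℚ) ^ (A.card + 1) * (∏ i ∈ Icc 1 (A.card + 1), (blockI K s A i : ℚ)) *
    (∏ a ∈ A, ((K a : ℚ) + K (a + 1))) /
    ∏ i ∈ Icc 1 A.card,
      ((∑ k ∈ Icc 1 ((bnds s A).getD i 0), (K k : ℚ)) *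
        (∑ k ∈ Icc 1 s, (K k : ℚ) - ∑ k ∈ Icc 1 ((bnds s A).getD i 0), (K k : ℚ) + b))

theorem krattenthalerTerm_empty (K : ℕ → ℕ) (s : ℕ) (b : ℚ) :
    krattenthalerTerm K s b ∅ = -∑ k ∈ Icc 1 s, (K k : ℚ) := by
  simp [krattenthalerTerm, blockI_empty_one]

theorem krattenthalerTerm_insert (K : ℕ → ℕ) {a s : ℕ} (b : ℚ) {A : Finset ℕ}
    (h : ∀ x ∈ A, x < a) (has : a ≤ s) :
    krattenthalerTerm K s b (insert a A) =
      -((∑ k ∈ Icc (a + 1) s, (K k : ℚ)) * (K a + K (a + 1))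
          / ((∑ k ∈ Icc 1 a, (K k : ℚ)) * ((∑ k ∈ Icc (a + 1) s, (K k : ℚ)) + b)))
        * krattenthalerTerm K a ((∑ k ∈ Icc (a + 1) s, (K k : ℚ)) + b) A := by
  have ha : a ∉ A := fun ha => (h a ha).false
  unfold krattenthalerTerm
  rw [prod_blockI_insert K (fun n : ℕ => (n : ℚ)) h,
    prod_getD_bnds_insert (fun p => (∑ k ∈ Icc 1 p, (K k : ℚ)) *
      ((∑ k ∈ Icc 1 s, (K k : ℚ)) - (∑ k ∈ Icc 1 p, (K k : ℚ)) + b)) h,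
    prod_insert ha, card_insert_of_notMem ha, ← sum_Icc_one_add_sum_Icc_succ _ has]
  push_cast
  set P := ∑ k ∈ Icc 1 a, (K k : ℚ)
  set Q := ∑ k ∈ Icc (a + 1) s, (K k : ℚ)
  simp_rw [show ∀ x : ℚ, P + Q - x + b = P - x + (Q + b) from fun x => by ring]
  simp only [div_eq_mul_inv, mul_inv]
  ring

theorem Finset.sum_Icc_sum_Icc_succ_mul_add {R : Type*} [CommRing R] (f : ℕ → R) {s : ℕ}
    (hs : 1 ≤ s) :
    ∑ a ∈ Icc 1 (s - 1), (∑ k ∈ Icc (a + 1) s, f k) * (f a + f (a + 1))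
      = (∑ k ∈ Icc 1 s, f k) * (∑ k ∈ Icc 1 s, f k - f 1) := by
  set Q : ℕ → R := fun m => ∑ k ∈ Icc (m + 1) s, f k
  have hQ : ∀ m < s, Q m = f (m + 1) + Q (m + 1) := fun m hm => by
    simp only [Q]
    rw [← insert_Icc_add_one_left_eq_Icc hm, sum_insert (by simp)]
  set g : ℕ → R := fun m => Q (m - 1) * Q m
  have hterm : ∀ a ∈ Ico 1 s, Q a * (f a + f (a + 1)) = -(g (a + 1) - g a) := by
    intro a ha
    obtain ⟨m, rfl⟩ : ∃ m, a = m + 1 := ⟨a - 1, by simp at ha; omega⟩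
    simp only [g, Nat.add_sub_cancel]
    rw [hQ m (by simp at ha; omega), hQ (m + 1) (by simp at ha; omega)]
    ring
  rw [← Ico_add_one_right_eq_Icc, Nat.sub_add_cancel hs, sum_congr rfl hterm, sum_neg_distrib,
    sum_Ico_sub g hs, neg_sub]
  have hQs : Q s = 0 := by simp [Q]
  simp only [g, Nat.sub_self, hQs, mul_zero, sub_zero]
  rw [show ∑ k ∈ Icc 1 s, f k = Q 0 from rfl, hQ 0 hs]
  ring

theorem sum_krattenthalerTerm (K : ℕ → ℕ) {s : ℕ} (hs : 1 ≤ s)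
    (hK : ∀ i, 1 ≤ i → i ≤ s → 0 < K i) {b : ℚ} (hb : 0 < b) :
    ∑ A ∈ (Icc 1 (s - 1)).powerset, krattenthalerTerm K s b A
      = -(b * ∑ k ∈ Icc 1 s, (K k : ℚ)) / (∑ k ∈ Icc 1 s, (K k : ℚ) - K 1 + b) := by
  induction s using Nat.strong_induction_on generalizing b with
  | _ s ih =>
  set S := ∑ k ∈ Icc 1 s, (K k : ℚ)
  have hK1 : (0 : ℚ) < K 1 := by exact_mod_cast hK 1 le_rfl hs
  have hK1_le : ∀ m, 1 ≤ m → (K 1 : ℚ) ≤ ∑ k ∈ Icc 1 m, (K k : ℚ) := fun m hm =>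
    single_le_sum (fun k _ => Nat.cast_nonneg (K k)) (mem_Icc.2 ⟨le_rfl, hm⟩)
  have hD : 0 < S - K 1 + b := by linarith [hK1_le s hs]
  have hinner : ∀ a ∈ Icc 1 (s - 1),
      ∑ A ∈ (Icc 1 (a - 1)).powerset, krattenthalerTerm K s b (insert a A)
        = (∑ k ∈ Icc (a + 1) s, (K k : ℚ)) * (K a + K (a + 1)) / (S - K 1 + b) := by
    intro a ha
    rw [mem_Icc] at ha
    have hlt : ∀ A ∈ (Icc 1 (a - 1)).powerset, ∀ x ∈ A, x < a := fun A hA x hx => by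
      have := mem_Icc.1 (mem_powerset.1 hA hx); omega
    have hrec := ih a (by omega) ha.1 (fun i h1 h2 => hK i h1 (by omega))
      (b := ∑ k ∈ Icc (a + 1) s, (K k : ℚ) + b) (by positivity)
    have hPQ : ∑ k ∈ Icc 1 a, (K k : ℚ) + ∑ k ∈ Icc (a + 1) s, (K k : ℚ) = S :=
      sum_Icc_one_add_sum_Icc_succ _ (by omega)
    rw [sum_congr rfl fun A hA => krattenthalerTerm_insert K b (hlt A hA) (by omega), ← mul_sum,
      hrec, ← hPQ]
    have hP : 0 < ∑ k ∈ Icc 1 a, (K k : ℚ) := hK1.trans_le (hK1_le a ha.1)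
    have hQb : 0 < ∑ k ∈ Icc (a + 1) s, (K k : ℚ) + b := by positivity
    field_simp
    ring
  rw [sum_powerset_Icc_one_eq_add_sum_max, krattenthalerTerm_empty, sum_congr rfl hinner,
    ← sum_div, sum_Icc_sum_Icc_succ_mul_add _ hs]
  field_simp
  ring

/-- Krattenthaler's identity, specialized case `X = Y = -b`:
`∑_{A ⊆ [s-1]} (-1)^r I_1 ⋯ I_r ∏_{a∈A}(K_a+K_{a+1}) / ∏_{i=1}^{r-1}(∑_{k≤i}I_k)(∑_{k>i}I_k + b)
 = -b|K|/(|K| - K_1 + b)`. -/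
theorem krattenthaler_specialized (s : ℕ) (hs : 1 ≤ s) (K : ℕ → ℕ)
    (hK : ∀ i, 1 ≤ i → i ≤ s → 0 < K i) (b : ℚ) (hb : 0 < b) :
    ∑ A ∈ (Finset.Icc 1 (s-1)).powerset,
        ((-1 : ℚ))^(A.card + 1) * (∏ i ∈ Finset.Icc 1 (A.card + 1), (blockI K s A i : ℚ)) *
          (∏ a ∈ A, ((K a : ℚ) + (K (a+1) : ℚ))) /
          (∏ i ∈ Finset.Icc 1 A.card,
            ((∑ k ∈ Finset.Icc 1 ((bnds s A).getD i 0), (K k : ℚ)) *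
              ((∑ k ∈ Finset.Icc 1 s, (K k : ℚ))
                - (∑ k ∈ Finset.Icc 1 ((bnds s A).getD i 0), (K k : ℚ)) + b)))
      = -(b * (∑ k ∈ Finset.Icc 1 s, (K k : ℚ)))
          / ((∑ k ∈ Finset.Icc 1 s, (K k : ℚ)) - (K 1 : ℚ) + b) :=
  sum_krattenthalerTerm K hs hK hb
end

section
/- Krattenthaler's identity (case b = 0): Let s > 1 and K_1, ..., K_s positive integers. With the notation for subsets A ⊆ {1,...,s−1} and associated compositions J_1,...,J_r, I = (|J_1|,...,|J_r|) as follows: J_1 = (K_1,...,K_{a_1}), ..., J_r = (K_{a_{r−1}+1},...,K_s), then ∑_{A ⊆ {1,...,s−1}} (−1)^r I_1 ⋯ I_r · (∏_{a∈A}(K_a + K_{a+1})) / (∏_{i=1}^{r−1} (∑_{k=1}^i I_k)(∑_{k=i+1}^r I_k)) = 0. -/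
open Finset

/-! Write `P_p = K_1 + ⋯ + K_p` and replace `P_s` in the denominators by a parameter `c`.
If `p` is the largest element of `A ∪ {p}`, the summand of `A ∪ {p}` for the composition
`(K_1, …, K_t)` is the summand of `A` for `(K_1, …, K_p)` times
`-(P_t - P_p)(P_{p+1} - P_{p-1}) / (P_p (c - P_p))`. Strong induction on `t` then gives
`∑_{A ⊆ [t-1]} summand = -P_t (c - P_t) / (c - P_1)`,
the inductive step being the telescoping identity
`∑_{p=1}^{t-1} (P_t - P_p)(P_{p+1} - P_{p-1}) = P_t (P_t - P_1)`.
At `t = s` the factor `c - P_t` vanishes. -/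

namespace Krattenthaler

theorem sort_insert_of_forall_lt {α : Type*} [LinearOrder α] {a : α} {s : Finset α}
    (h : ∀ b ∈ s, b < a) : (insert a s).sort (· ≤ ·) = s.sort (· ≤ ·) ++ [a] := by
  refine List.Pairwise.eq_of_mem_iff (r := (· < ·)) (sortedLT_sort _).pairwise ?_ ?_
  · refine List.pairwise_append.2 ⟨(sortedLT_sort _).pairwise, List.pairwise_singleton _ a, ?_⟩
    simpa using h
  · intro b
    simp [or_comm]

theorem sum_powerset_Icc_eq_add_sum_insert_max {M : Type*} [AddCommMonoid M] (t : ℕ)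
    (f : Finset ℕ → M) :
    ∑ A ∈ (Icc 1 t).powerset, f A
      = f ∅ + ∑ p ∈ Icc 1 t, ∑ A ∈ (Icc 1 (p - 1)).powerset, f (insert p A) := by
  induction t with
  | zero => simp
  | succ n ih =>
    rw [← insert_Icc_right_eq_Icc_add_one (by omega), sum_powerset_insert (by simp), ih,
      sum_insert (by simp), add_assoc, add_comm (∑ _ ∈ _, _), Nat.add_sub_cancel]

theorem sum_Icc_succ_sub_pred {R : Type*} [AddCommGroup R] (x : ℕ → R) (n : ℕ) :
    ∑ p ∈ Icc 1 n, (x (p + 1) - x (p - 1)) = x (n + 1) + x n - x 1 - x 0 := by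
  induction n with
  | zero => simp
  | succ n ih =>
    rw [sum_Icc_succ_top (by omega), ih, Nat.add_sub_cancel]
    abel

theorem sum_Icc_mul_succ_sub_pred {R : Type*} [CommRing R] (x : ℕ → R) (t : ℕ) :
    ∑ p ∈ Icc 1 (t - 1), (x t - x p) * (x (p + 1) - x (p - 1)) = (x t - x 0) * (x t - x 1) := by
  obtain _ | n := t
  · simp
  rw [Nat.add_sub_cancel]
  induction n with
  | zero => simp
  | succ n ih =>
    have hsplit : ∑ p ∈ Icc 1 n, (x (n + 2) - x p) * (x (p + 1) - x (p - 1))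
        = ∑ p ∈ Icc 1 n, (x (n + 1) - x p) * (x (p + 1) - x (p - 1))
          + (x (n + 2) - x (n + 1)) * ∑ p ∈ Icc 1 n, (x (p + 1) - x (p - 1)) := by
      rw [mul_sum, ← sum_add_distrib]
      exact sum_congr rfl fun p _ => by ring
    rw [sum_Icc_succ_top (by omega), hsplit, ih, sum_Icc_succ_sub_pred, Nat.add_sub_cancel]
    ring

variable (K : ℕ → ℕ)

def prefixSum (p : ℕ) : ℚ := ∑ k ∈ Icc 1 p, (K k : ℚ)

theorem prefixSum_zero : prefixSum K 0 = 0 := by simp [prefixSum]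

theorem prefixSum_succ (p : ℕ) : prefixSum K (p + 1) = prefixSum K p + K (p + 1) :=
  sum_Icc_succ_top (by omega) _

theorem add_eq_prefixSum_sub {p : ℕ} (hp : 1 ≤ p) :
    (K p + K (p + 1) : ℚ) = prefixSum K (p + 1) - prefixSum K (p - 1) := by
  obtain ⟨q, rfl⟩ := Nat.exists_eq_add_of_le' hp
  rw [prefixSum_succ, prefixSum_succ, Nat.add_sub_cancel]
  ring

theorem cast_sum_Icc_eq_prefixSum_sub {p t : ℕ} (hpt : p ≤ t) :
    ((∑ k ∈ Icc (p + 1) t, K k : ℕ) : ℚ) = prefixSum K t - prefixSum K p := by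
  rw [eq_sub_iff_add_eq', prefixSum, prefixSum, Nat.cast_sum, Icc_add_one_left_eq_Ioc]
  exact sum_Ioc_consecutive _ (Nat.zero_le p) hpt

theorem prefixSum_lt_prefixSum {s : ℕ} (hK : ∀ i, 1 ≤ i → i ≤ s → 0 < K i) {p q : ℕ}
    (hpq : p < q) (hq : q ≤ s) : prefixSum K p < prefixSum K q :=
  sum_lt_sum_of_subset (Icc_subset_Icc_right hpq.le) (i := q) (by simp; omega) (by simp; omega)
    (by exact_mod_cast hK q (by omega) hq) (fun _ _ _ => by positivity)

section Insert

variable {p t : ℕ} {A : Finset ℕ}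

theorem bnds_getD_card_add_one : (bnds t A).getD (A.card + 1) 0 = t := by
  rw [bnds, List.getD_cons_succ, List.getD_append_right _ _ _ _ (by simp)]
  simp

theorem bnds_insert_of_forall_lt (hA : ∀ a ∈ A, a < p) :
    bnds t (insert p A) = bnds p A ++ [t] := by
  simp [bnds, sort_insert_of_forall_lt hA]

theorem bnds_insert_getD (hA : ∀ a ∈ A, a < p) {i : ℕ} (hi : i ≤ A.card + 1) :
    (bnds t (insert p A)).getD i 0 = (bnds p A).getD i 0 := by
  rw [bnds_insert_of_forall_lt hA, List.getD_append _ _ _ _ (by simp [bnds]; omega)]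

theorem blockI_insert_of_le (hA : ∀ a ∈ A, a < p) {i : ℕ} (hi : i ≤ A.card + 1) :
    blockI K t (insert p A) i = blockI K p A i := by
  rw [blockI, blockI, bnds_insert_getD hA hi, bnds_insert_getD hA (by omega)]

theorem blockI_insert_card_add_two (hA : ∀ a ∈ A, a < p) :
    blockI K t (insert p A) (A.card + 1 + 1) = ∑ k ∈ Icc (p + 1) t, K k := by
  rw [blockI, Nat.add_sub_cancel, bnds_insert_getD hA le_rfl, bnds_getD_card_add_one,
    bnds_insert_of_forall_lt hA, List.getD_append_right _ _ _ _ (by simp [bnds])]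
  simp [bnds]

end Insert

def krattTerm (c : ℚ) (t : ℕ) (A : Finset ℕ) : ℚ :=
  (-1 : ℚ) ^ (A.card + 1) * (∏ i ∈ Icc 1 (A.card + 1), (blockI K t A i : ℚ)) *
    (∏ a ∈ A, ((K a : ℚ) + K (a + 1))) /
    ∏ i ∈ Icc 1 A.card,
      (prefixSum K ((bnds t A).getD i 0) * (c - prefixSum K ((bnds t A).getD i 0)))

theorem krattTerm_empty (c : ℚ) (t : ℕ) : krattTerm K c t ∅ = -prefixSum K t := by
  simp [krattTerm, blockI, bnds, prefixSum]

theorem krattTerm_insert {c : ℚ} {p t : ℕ} {A : Finset ℕ} (hA : ∀ a ∈ A, a < p) (hpt : p ≤ t) :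
    krattTerm K c t (insert p A)
      = -((prefixSum K t - prefixSum K p) * (K p + K (p + 1)) /
          (prefixSum K p * (c - prefixSum K p))) * krattTerm K c p A := by
  have hcard : (insert p A).card = A.card + 1 :=
    card_insert_of_notMem fun hp => lt_irrefl p (hA p hp)
  have hblocks : ∏ i ∈ Icc 1 (A.card + 1 + 1), (blockI K t (insert p A) i : ℚ)
      = (∏ i ∈ Icc 1 (A.card + 1), (blockI K p A i : ℚ)) * (prefixSum K t - prefixSum K p) := by
    rw [prod_Icc_succ_top (by omega), blockI_insert_card_add_two K hA,
      cast_sum_Icc_eq_prefixSum_sub K hpt]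
    congr 1
    exact prod_congr rfl fun i hi => by rw [blockI_insert_of_le K hA (mem_Icc.1 hi).2]
  have hdenom : ∏ i ∈ Icc 1 (A.card + 1),
        (prefixSum K ((bnds t (insert p A)).getD i 0) *
          (c - prefixSum K ((bnds t (insert p A)).getD i 0)))
      = (∏ i ∈ Icc 1 A.card,
          (prefixSum K ((bnds p A).getD i 0) * (c - prefixSum K ((bnds p A).getD i 0)))) *
        (prefixSum K p * (c - prefixSum K p)) := by
    rw [prod_Icc_succ_top (by omega), bnds_insert_getD hA le_rfl, bnds_getD_card_add_one]
    congr 1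
    exact prod_congr rfl fun i hi => by rw [bnds_insert_getD hA (by simp at hi; omega)]
  rw [krattTerm, krattTerm, hcard, hblocks, hdenom, prod_insert fun hp => lt_irrefl p (hA p hp),
    pow_succ]
  simp only [div_eq_mul_inv, mul_inv]
  ring

theorem sum_krattTerm (c : ℚ) (t : ℕ) (hP : ∀ p, 1 ≤ p → p < t → prefixSum K p ≠ 0)
    (hc : ∀ p, 1 ≤ p → p < t → c ≠ prefixSum K p) (hc₁ : c ≠ prefixSum K 1) :
    ∑ A ∈ (Icc 1 (t - 1)).powerset, krattTerm K c t A
      = -prefixSum K t * (c - prefixSum K t) / (c - prefixSum K 1) := by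
  induction t using Nat.strong_induction_on with
  | _ t ih =>
  have hc₁' : c - prefixSum K 1 ≠ 0 := sub_ne_zero.2 hc₁
  have hmax : ∀ p ∈ Icc 1 (t - 1), ∑ A ∈ (Icc 1 (p - 1)).powerset, krattTerm K c t (insert p A)
      = (prefixSum K t - prefixSum K p) * (prefixSum K (p + 1) - prefixSum K (p - 1)) /
          (c - prefixSum K 1) := by
    intro p hp
    obtain ⟨hp₁, hpt⟩ := mem_Icc.1 hp
    have hsub : ∀ A ∈ (Icc 1 (p - 1)).powerset, ∀ a ∈ A, a < p := fun A hA a ha => by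
      have := mem_Icc.1 (mem_powerset.1 hA ha); omega
    rw [sum_congr rfl fun A hA => krattTerm_insert K (hsub A hA) (by omega), ← mul_sum,
      ih p (by omega) (fun q hq hqp => hP q hq (by omega)) (fun q hq hqp => hc q hq (by omega)),
      add_eq_prefixSum_sub K hp₁]
    have := hP p hp₁ (by omega)
    have := sub_ne_zero.2 (hc p hp₁ (by omega))
    field_simp
  rw [sum_powerset_Icc_eq_add_sum_insert_max, krattTerm_empty, sum_congr rfl hmax, ← sum_div,
    sum_Icc_mul_succ_sub_pred (prefixSum K), prefixSum_zero]
  field_simp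
  ring

end Krattenthaler

/-- Krattenthaler's identity, case `b = 0`: for `s > 1`,
`∑_{A ⊆ [s-1]} (-1)^r I_1 ⋯ I_r ∏_{a∈A}(K_a+K_{a+1}) / ∏_{i=1}^{r-1}(∑_{k≤i}I_k)(∑_{k>i}I_k) = 0`. -/
theorem krattenthaler_b_zero (s : ℕ) (hs : 1 < s) (K : ℕ → ℕ)
    (hK : ∀ i, 1 ≤ i → i ≤ s → 0 < K i) :
    ∑ A ∈ (Finset.Icc 1 (s-1)).powerset,
        ((-1 : ℚ))^(A.card + 1) * (∏ i ∈ Finset.Icc 1 (A.card + 1), (blockI K s A i : ℚ)) *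
          (∏ a ∈ A, ((K a : ℚ) + (K (a+1) : ℚ))) /
          (∏ i ∈ Finset.Icc 1 A.card,
            ((∑ k ∈ Finset.Icc 1 ((bnds s A).getD i 0), (K k : ℚ)) *
              ((∑ k ∈ Finset.Icc 1 s, (K k : ℚ))
                - (∑ k ∈ Finset.Icc 1 ((bnds s A).getD i 0), (K k : ℚ)))))
      = 0 := by
  open Krattenthaler in
  have key := sum_krattTerm K (prefixSum K s) s
    (fun p hp hps => by
      simpa [prefixSum_zero] using (prefixSum_lt_prefixSum K hK hp hps.le).ne')
    (fun p _ hps => (prefixSum_lt_prefixSum K hK hps le_rfl).ne')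
    (prefixSum_lt_prefixSum K hK hs le_rfl).ne'
  rwa [sub_self, mul_zero, zero_div] at key
end

section
/- Vanishing of composition coefficients: Let s > 1 and K = (K_1, ..., K_s) be a composition of N into positive integers. For each subset A ⊆ {1,...,s−1} with |A| = r−1, split K at the positions of A into blocks J_1, ..., J_r and set I = (|J_1|,...,|J_r|). Then ∑_{A ⊆ {1,...,s−1}} n_I · m_{J_1} ⋯ m_{J_r} = 0, where n and m are the Juhl constants. -/
open Finset

/-- The Juhl constant `n_I` for a composition `I = (I_1, ..., I_r)`, as a rational number. -/
noncomputable def nJuhl (I : List ℕ) : ℚ :=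
  ((Nat.factorial (I.sum - 1) : ℚ))^2 *
    (∏ j ∈ Finset.range I.length, (1 : ℚ) / ((Nat.factorial (I.getD j 0 - 1) : ℚ))^2) *
    (∏ j ∈ Finset.range (I.length - 1),
      (1 : ℚ) / ((((I.take (j+1)).sum : ℚ)) * (((I.drop (j+1)).sum : ℚ))))

/-- The Juhl constant `m_I` for a composition `I = (I_1, ..., I_r)`, as a rational number. -/
noncomputable def mJuhl (I : List ℕ) : ℚ :=
  (-1 : ℚ)^(I.length + 1) * (Nat.factorial I.sum : ℚ) * (Nat.factorial (I.sum - 1) : ℚ) *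
    (∏ j ∈ Finset.range I.length,
      (1 : ℚ) / ((Nat.factorial (I.getD j 0) : ℚ) * (Nat.factorial (I.getD j 0 - 1) : ℚ))) *
    (∏ j ∈ Finset.range (I.length - 1),
      (1 : ℚ) / (((I.getD j 0 : ℚ)) + ((I.getD (j+1) 0 : ℚ))))

/-- The `i`-th block `J_i` (for `1 ≤ i ≤ |A| + 1`) of the list `K` split at the positions
of `A`. -/
def Jblock (K : List ℕ) (A : Finset ℕ) (i : ℕ) : List ℕ :=
  (K.take ((bnds K.length A).getD i 0)).drop ((bnds K.length A).getD (i-1) 0)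

/-- The composition `I = (|J_1|, ..., |J_r|)` of block sums. -/
def Ilist (K : List ℕ) (A : Finset ℕ) : List ℕ :=
  (List.range (A.card + 1)).map (fun i => (Jblock K A (i+1)).sum)

/-!
Put `x_i = K_1 + ⋯ + K_i` and `N = x_s`. In `n_I · ∏ m_{J_i}` the factor `1/(|J| - 1)!²` of `n_I`
cancels `|J|! (|J| - 1)!` of `m_J` down to `|J| = x_b - x_a`, for the block `J` made of the entries
`a < i ≤ b`. Hence, up to a factor independent of the cut set `A`, each summand is `(-1)^|A|` times
`∏_blocks (x_b - x_a) · ∏_{c ∈ A} 1/(x_c (N - x_c)) · ∏_{0 < i < s, i ∉ A} 1/(x_{i+1} - x_{i-1})`,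
the last product coming from the factors `1/(K_i + K_{i+1})` of the `m_J`. Summing over the cuts at
positions `≥ t` by descending induction on `t` gives a closed form proportional to
`(N - x_j) x_j + (x_{t-1} - x_j) (x_t - x_j)`, where `j` is the start of the current block; for
`j = 0`, `t = 1` it vanishes because `x_0 = 0`.
-/

open scoped Nat

namespace Juhl

theorem prod_range_getD_eq_prod_map {α M : Type*} [CommMonoid M] (L : List α) (d : α)
    (f : α → M) : ∏ i ∈ range L.length, f (L.getD i d) = (L.map f).prod := by
  rw [prod_range, ← Fin.prod_univ_fun_getElem]
  simp

section CutWeight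

variable {F : Type*} [Field F]

def gapFactor (x : ℕ → F) (i : ℕ) : F := (x (i + 1) - x (i - 1))⁻¹

def cutFactor (x : ℕ → F) (s c : ℕ) : F := (x c * (x s - x c))⁻¹

def cutWeight (x : ℕ → F) (s : ℕ) : ℕ → List ℕ → F
  | j, [] => (x s - x j) * ∏ i ∈ Ico (j + 1) s, gapFactor x i
  | j, c :: l =>
    -((x c - x j) * (∏ i ∈ Ico (j + 1) c, gapFactor x i) * cutFactor x s c * cutWeight x s c l)

variable [LinearOrder F] [IsStrictOrderedRing F] {x : ℕ → F} {s : ℕ}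

theorem sum_powerset_cutWeight (hx : StrictMonoOn x (Set.Iic s)) (hx0 : 0 ≤ x 0) (hs : 1 < s)
    {t : ℕ} (hts : t ≤ s) {j : ℕ} (hjt : j < t) :
    ∑ A ∈ (Icc t (s - 1)).powerset, cutWeight x s j (A.sort (· ≤ ·)) =
      (∏ i ∈ Ico (j + 1) s, gapFactor x i) *
        ((x s - x j) * x j + (x (t - 1) - x j) * (x t - x j)) / x (s - 1) := by
  have hlt {a b : ℕ} (hab : a < b) (hb : b ≤ s) : x a < x b :=
    hx (Set.mem_Iic.2 (by omega)) (Set.mem_Iic.2 hb) hab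
  have hpos {a : ℕ} (ha : 0 < a) (has : a ≤ s) : x a ≠ 0 := (hx0.trans_lt (hlt ha has)).ne'
  have hs1 : x (s - 1) ≠ 0 := hpos (by omega) (by omega)
  induction hts using Nat.decreasingInduction generalizing j with
  | self =>
    rw [Icc_eq_empty (by omega), powerset_empty, sum_singleton, sort_empty, cutWeight]
    field_simp
    ring
  | of_succ t hts ih =>
    have hnot : t ∉ Icc (t + 1) (s - 1) := by simp
    rw [← insert_Icc_add_one_left_eq_Icc (show t ≤ s - 1 by omega), sum_powerset_insert hnot]
    have hcons (A) (hA : A ∈ (Icc (t + 1) (s - 1)).powerset) :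
        cutWeight x s j ((insert t A).sort (· ≤ ·)) =
          -((x t - x j) * (∏ i ∈ Ico (j + 1) t, gapFactor x i) * cutFactor x s t) *
            cutWeight x s t (A.sort (· ≤ ·)) := by
      have hA' : ∀ b ∈ A, t < b := fun b hb => by
        have := mem_Icc.1 (mem_powerset.1 hA hb)
        omega
      rw [sort_insert _ (fun b hb => (hA' b hb).le) (fun h => (hA' t h).false), cutWeight]
      ring
    rw [sum_congr rfl hcons, ← mul_sum, ih (by omega), ih (by omega),
      ← prod_Ico_consecutive _ (show j + 1 ≤ t by omega) hts.le,
      prod_eq_prod_Ico_succ_bot (show t < s by omega), Nat.add_sub_cancel]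
    have hgap : x (t + 1) - x (t - 1) ≠ 0 := (sub_pos.2 (hlt (by omega) (by omega))).ne'
    have hcut : x s - x t ≠ 0 := (sub_pos.2 (hlt (by omega) le_rfl)).ne'
    have ht : x t ≠ 0 := hpos (by omega) (by omega)
    simp only [gapFactor, cutFactor]
    field_simp
    ring

theorem sum_powerset_cutWeight_eq_zero (hx : StrictMonoOn x (Set.Iic s)) (hx0 : x 0 = 0)
    (hs : 1 < s) : ∑ A ∈ (Icc 1 (s - 1)).powerset, cutWeight x s 0 (A.sort (· ≤ ·)) = 0 := by
  rw [sum_powerset_cutWeight hx hx0.ge hs (by omega) zero_lt_one]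
  simp [hx0]

end CutWeight

section Blocks

variable {K : List ℕ}

def partialSum (K : List ℕ) (i : ℕ) : ℚ := (K.take i).sum

def factorialWeight (n : ℕ) : ℚ := 1 / ((n ! : ℚ) * ((n - 1)! : ℚ))

def blocks (K : List ℕ) (j : ℕ) (l : List ℕ) : List (List ℕ) :=
  List.zipWith (fun a b => (K.take b).drop a) (j :: l) (l ++ [K.length])

theorem partialSum_zero : partialSum K 0 = 0 := by simp [partialSum]

theorem partialSum_length : partialSum K K.length = K.sum := by simp [partialSum]

theorem cast_sum_block {a b : ℕ} (hab : a ≤ b) :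
    ((((K.take b).drop a).sum : ℕ) : ℚ) = partialSum K b - partialSum K a := by
  have h := List.sum_take_add_sum_drop (K.take b) a
  rw [List.take_take, min_eq_left hab] at h
  rw [partialSum, partialSum, ← h]
  push_cast
  ring

theorem sum_block_pos (hK : ∀ x ∈ K, 0 < x) {a b : ℕ} (hab : a < b) (hb : b ≤ K.length) :
    0 < ((K.take b).drop a).sum :=
  List.sum_pos _ (fun y hy => hK y (List.mem_of_mem_take (List.mem_of_mem_drop hy)))
    (List.ne_nil_of_length_pos (by simp; omega))

theorem partialSum_strictMonoOn (hK : ∀ x ∈ K, 0 < x) :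
    StrictMonoOn (partialSum K) (Set.Iic K.length) := by
  intro a _ b hb hab
  have := cast_sum_block (K := K) hab.le
  have : (0 : ℚ) < (((K.take b).drop a).sum : ℕ) := by exact_mod_cast sum_block_pos hK hab hb
  linarith

theorem partialSum_succ {i : ℕ} (hi : i < K.length) :
    partialSum K (i + 1) = partialSum K i + K.getD i 0 := by
  rw [partialSum, partialSum, List.sum_take_succ K i hi, List.getD_eq_getElem K 0 hi]
  push_cast
  rfl

theorem one_div_sq_factorial_pred_mul {n : ℕ} (hn : 0 < n) :
    1 / ((n - 1)! : ℚ) ^ 2 * ((n ! : ℚ) * ((n - 1)! : ℚ)) = n := by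
  obtain ⟨m, rfl⟩ := Nat.exists_eq_add_of_lt hn
  have : (m ! : ℚ) ≠ 0 := by positivity
  simp only [zero_add, Nat.add_sub_cancel, Nat.factorial_succ]
  push_cast
  field_simp

theorem one_div_sq_mul_mJuhl_block (hK : ∀ x ∈ K, 0 < x) {a b : ℕ} (hab : a < b)
    (hb : b ≤ K.length) :
    1 / ((((K.take b).drop a).sum - 1)! : ℚ) ^ 2 * mJuhl ((K.take b).drop a) =
      (-1) ^ (b - a + 1) * (∏ t ∈ Ico a b, factorialWeight (K.getD t 0)) *
        ((partialSum K b - partialSum K a) * ∏ i ∈ Ico (a + 1) b, gapFactor (partialSum K) i) := by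
  set L := (K.take b).drop a with hL
  have hlen : L.length = b - a := by simp [hL]; omega
  have hget (t : ℕ) (ht : t < b - a) : L.getD t 0 = K.getD (a + t) 0 := by
    rw [List.getD_eq_getElem _ _ (by omega), List.getD_eq_getElem _ _ (by omega)]
    simp [hL]
  have hfw : ∏ t ∈ range L.length, 1 / (((L.getD t 0)! : ℚ) * ((L.getD t 0 - 1)! : ℚ)) =
      ∏ t ∈ Ico a b, factorialWeight (K.getD t 0) := by
    rw [prod_Ico_eq_prod_range, hlen]
    exact prod_congr rfl fun t ht => by rw [hget t (mem_range.1 ht)]; rfl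
  have hgap : ∏ t ∈ range (L.length - 1), 1 / ((L.getD t 0 : ℚ) + (L.getD (t + 1) 0 : ℚ)) =
      ∏ i ∈ Ico (a + 1) b, gapFactor (partialSum K) i := by
    rw [prod_Ico_eq_prod_range, hlen, show b - (a + 1) = b - a - 1 by omega]
    refine prod_congr rfl fun t ht => ?_
    have ht := mem_range.1 ht
    rw [hget t (by omega), hget (t + 1) (by omega), gapFactor, one_div,
      show a + 1 + t + 1 = a + t + 1 + 1 by omega, show a + 1 + t - 1 = a + t by omega,
      partialSum_succ (by omega), partialSum_succ (by omega)]
    ring_nf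
  have hP := one_div_sq_factorial_pred_mul (sum_block_pos hK hab hb)
  rw [cast_sum_block hab.le] at hP
  rw [mJuhl, hfw, hgap, hlen, ← hP]
  ring

theorem blocks_nil (j : ℕ) : blocks K j [] = [(K.take K.length).drop j] := rfl

theorem blocks_cons (j c : ℕ) (l : List ℕ) :
    blocks K j (c :: l) = (K.take c).drop j :: blocks K c l := rfl

theorem cast_sum_take_map_sum_blocks :
    ∀ (l : List ℕ) (j : ℕ), (j :: (l ++ [K.length])).Pairwise (· < ·) →
      ∀ i ≤ l.length, ((((blocks K j l).map List.sum).take (i + 1)).sum : ℚ) =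
        partialSum K ((l ++ [K.length]).getD i 0) - partialSum K j
  | [], j, hb, 0, _ => by
    have hj : j < K.length := (List.pairwise_cons.1 hb).1 _ (by simp)
    rw [blocks_nil, List.map_singleton, List.take_of_length_le (by simp), List.sum_singleton,
      cast_sum_block hj.le]
    rfl
  | c :: l, j, hb, 0, _ => by
    have hjc : j < c := (List.pairwise_cons.1 hb).1 c (by simp)
    simp [blocks_cons, cast_sum_block hjc.le]
  | c :: l, j, hb, i + 1, hi => by
    have hjc := (List.pairwise_cons.1 hb).1 c (by simp)
    have ih := cast_sum_take_map_sum_blocks l c (List.pairwise_cons.1 hb).2 i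
      (by simpa using hi)
    rw [blocks_cons, List.map_cons, List.take_succ_cons, List.sum_cons, Nat.cast_add, ih,
      cast_sum_block hjc.le]
    simp

theorem prod_blocks_mul_prod_cutFactor (hK : ∀ x ∈ K, 0 < x) :
    ∀ (l : List ℕ) (j : ℕ), (j :: (l ++ [K.length])).Pairwise (· < ·) →
      ((blocks K j l).map fun J => 1 / ((J.sum - 1)! : ℚ) ^ 2 * mJuhl J).prod *
          (l.map (cutFactor (partialSum K) K.length)).prod =
        (-1) ^ (K.length - j + 1) * (∏ t ∈ Ico j K.length, factorialWeight (K.getD t 0)) *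
          cutWeight (partialSum K) K.length j l
  | [], j, hb => by
    have hj : j < K.length := (List.pairwise_cons.1 hb).1 _ (by simp)
    simp only [blocks_nil, List.map_cons, List.map_nil, List.prod_cons, List.prod_nil,
      one_div_sq_mul_mJuhl_block hK hj le_rfl, cutWeight]
    ring
  | c :: l, j, hb => by
    have hjc : j < c := (List.pairwise_cons.1 hb).1 c (by simp)
    have hc : c < K.length := (List.pairwise_cons.1 (List.pairwise_cons.1 hb).2).1 _ (by simp)
    have ih := prod_blocks_mul_prod_cutFactor hK l c (List.pairwise_cons.1 hb).2
    have hsign : (-1 : ℚ) ^ (c - j + 1) * (-1) ^ (K.length - c + 1) =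
        -(-1) ^ (K.length - j + 1) := by
      rw [← pow_add, show c - j + 1 + (K.length - c + 1) = K.length - j + 1 + 1 by omega,
        pow_succ]
      ring
    rw [← prod_Ico_consecutive _ hjc.le hc.le, cutWeight]
    simp only [blocks_cons, List.map_cons, List.prod_cons,
      one_div_sq_mul_mJuhl_block hK hjc hc.le]
    linear_combination
      (∏ t ∈ Ico j c, factorialWeight (K.getD t 0)) * (partialSum K c - partialSum K j) *
        (∏ i ∈ Ico (j + 1) c, gapFactor (partialSum K) i) * cutFactor (partialSum K) K.length c *
        ((-1) ^ (c - j + 1) * ih + (∏ t ∈ Ico c K.length, factorialWeight (K.getD t 0)) *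
          cutWeight (partialSum K) K.length c l * hsign)

theorem map_range_Jblock (A : Finset ℕ) :
    (List.range (A.card + 1)).map (fun i => Jblock K A (i + 1)) =
      blocks K 0 (A.sort (· ≤ ·)) := by
  apply List.ext_getElem
  · simp [blocks]
  intro i h1 h2
  have hi : i < (A.sort (· ≤ ·)).length + 1 := by simpa using h1
  have hb : (bnds K.length A).getD i 0 = (0 :: A.sort (· ≤ ·))[i] := by
    rw [bnds, ← List.cons_append, List.getD_append _ _ _ _ (by simpa using hi),
      List.getD_eq_getElem]
  simp only [List.getElem_map, List.getElem_range, Jblock, Nat.add_sub_cancel, hb, blocks,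
    List.getElem_zipWith]
  rw [bnds, List.getD_cons_succ, List.getD_eq_getElem]

theorem Ilist_eq_map_sum_blocks (A : Finset ℕ) :
    Ilist K A = (blocks K 0 (A.sort (· ≤ ·))).map List.sum := by
  rw [← map_range_Jblock, List.map_map]
  rfl

theorem prod_mJuhl_Jblock (A : Finset ℕ) :
    ∏ i ∈ Icc 1 (A.card + 1), mJuhl (Jblock K A i) =
      ((blocks K 0 (A.sort (· ≤ ·))).map mJuhl).prod := by
  rw [← map_range_Jblock, List.map_map, ← Finset.Ico_add_one_right_eq_Icc, prod_Ico_eq_prod_range]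
  simp [add_comm, Function.comp_def, prod_eq_multiset_prod, Multiset.range]

theorem pairwise_bnds (hs : 0 < K.length) {A : Finset ℕ} (hA : A ⊆ Icc 1 (K.length - 1)) :
    (0 :: (A.sort (· ≤ ·) ++ [K.length])).Pairwise (· < ·) := by
  have hmem {a : ℕ} (ha : a ∈ A.sort (· ≤ ·)) : 1 ≤ a ∧ a ≤ K.length - 1 :=
    mem_Icc.1 (hA ((mem_sort _).1 ha))
  simp only [List.pairwise_cons, List.pairwise_append, List.mem_append, List.mem_singleton]
  refine ⟨fun a ha => ?_, ⟨(sortedLT_sort A).pairwise, by simp, fun a ha b hb => ?_⟩⟩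
  · rcases ha with ha | rfl
    · exact (hmem ha).1
    · exact hs
  · have := hmem ha
    omega

theorem nJuhl_Ilist_mul_prod_mJuhl (hK : ∀ x ∈ K, 0 < x) (hs : 0 < K.length) {A : Finset ℕ}
    (hA : A ⊆ Icc 1 (K.length - 1)) :
    nJuhl (Ilist K A) * ∏ i ∈ Icc 1 (A.card + 1), mJuhl (Jblock K A i) =
      (-1) ^ (K.length + 1) * ((K.sum - 1)! : ℚ) ^ 2 *
        (∏ t ∈ Ico 0 K.length, factorialWeight (K.getD t 0)) *
          cutWeight (partialSum K) K.length 0 (A.sort (· ≤ ·)) := by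
  rw [Ilist_eq_map_sum_blocks, prod_mJuhl_Jblock]
  set l := A.sort (· ≤ ·)
  have hb := pairwise_bnds hs hA
  set I := (blocks K 0 l).map List.sum
  have hlen : I.length = l.length + 1 := by simp [I, blocks]
  have hprefix (i : ℕ) (hi : i ≤ l.length) :
      ((I.take (i + 1)).sum : ℚ) = partialSum K ((l ++ [K.length]).getD i 0) := by
    rw [cast_sum_take_map_sum_blocks l 0 hb i hi, partialSum_zero, sub_zero]
  have hsum : I.sum = K.sum := by
    have := hprefix l.length le_rfl
    rw [List.take_of_length_le (by omega), List.getD_append_right _ _ _ _ le_rfl,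
      Nat.sub_self, List.getD_cons_zero, partialSum_length] at this
    exact_mod_cast this
  have hcut : ∏ j ∈ range (I.length - 1),
      1 / (((I.take (j + 1)).sum : ℚ) * ((I.drop (j + 1)).sum : ℚ)) =
        (l.map (cutFactor (partialSum K) K.length)).prod := by
    rw [hlen, Nat.add_sub_cancel, ← prod_range_getD_eq_prod_map]
    refine prod_congr rfl fun j hj => ?_
    have hj := mem_range.1 hj
    have hdrop : ((I.drop (j + 1)).sum : ℚ) = K.sum - ((I.take (j + 1)).sum : ℚ) := by
      rw [← hsum, ← List.sum_take_add_sum_drop I (j + 1)]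
      push_cast
      ring
    rw [hdrop, hprefix j hj.le, List.getD_append _ _ _ _ hj, cutFactor, partialSum_length,
      one_div]
  have hkey := prod_blocks_mul_prod_cutFactor hK l 0 hb
  rw [List.prod_map_mul, Nat.sub_zero] at hkey
  rw [nJuhl, hsum, prod_range_getD_eq_prod_map I 0 fun p => 1 / ((p - 1)! : ℚ) ^ 2, hcut,
    List.map_map, Function.comp_def]
  linear_combination ((K.sum - 1)! : ℚ) ^ 2 * hkey

end Blocks

end Juhl

/-- Vanishing of composition coefficients: for `s > 1` and a composition `K = (K_1, ..., K_s)`,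
`∑_{A ⊆ {1,...,s-1}} n_I m_{J_1} ⋯ m_{J_r} = 0`. -/
theorem sum_nJuhl_mJuhl_eq_zero (K : List ℕ) (hs : 1 < K.length) (hK : ∀ x ∈ K, 0 < x) :
    ∑ A ∈ (Finset.Icc 1 (K.length - 1)).powerset,
        nJuhl (Ilist K A) * ∏ i ∈ Finset.Icc 1 (A.card + 1), mJuhl (Jblock K A i)
      = 0 := by
  rw [sum_congr rfl fun A hA =>
      Juhl.nJuhl_Ilist_mul_prod_mJuhl hK (by omega) (mem_powerset.1 hA), ← mul_sum,
    Juhl.sum_powerset_cutWeight_eq_zero (Juhl.partialSum_strictMonoOn hK) Juhl.partialSum_zero hs,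
    mul_zero]
end

section
/- Inversion of the n and m transforms: Let A be a (possibly noncommutative) ℚ-algebra and let (P_{2N})_{N≥1} be elements of A. Define M̄_{2N} = ∑_{|I|=N} m_I P_{2I}, where P_{2I} = P_{2I_1}⋯P_{2I_r} and the sum is over compositions I of N. Then for every N ≥ 1, P_{2N} = ∑_{|I|=N} n_I M̄_{2I}, where M̄_{2I} = M̄_{2I_1}⋯M̄_{2I_r}. -/
open Finset

/-!
Write a composition of `N` as `J ++ [k]`: then `n_{J ++ [k]} = (N-1)!² / (k-1)!² · nPrefix N J`,
and appending a part `k` that brings the total to `σ` multiplies `nPrefix N` by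
`1 / ((k-1)!² σ (N - σ))`. So for `σ < N` the sums `V_σ = ∑_{|J| = σ} nPrefix N J • M_J` are
determined by `V_0 = 1` and `σ (N - σ) V_σ = ∑_k (k-1)!⁻² V_{σ-k} M_k`.

On the `P` side let `mCore I = m_I / (|I|! (|I|-1)!)`,
`mPrefix N (a :: t) = mCore (a :: t) / (N - a)` and `U_σ = ∑_{|J| = σ} mPrefix N J • P_J`.
Expanding `M_k` and cutting each composition `l` of `σ` into a prefix and a nonempty suffix turns
`∑_k (k-1)!⁻² U_{σ-k} M_k` into `∑_l w(l) P_l` with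
`w(l) = ∑_p mPrefix N l_{<p} · |l_{≥p}| · mCore l_{≥p}`. Peeling off the first part of `l` gives the
telescoping identity `w(l) = |l| (N - |l|) mPrefix N l`, so `U` obeys the recursion of `V` and
`U = V`. At `σ = N` the same identity kills every term except `l = [N]`, leaving `P_N / (N-1)!²`.
-/

open scoped Nat

namespace Juhl

noncomputable def compositionLists (n : ℕ) : Finset (List ℕ) :=
  (univ : Finset (Composition n)).image Composition.blocks

theorem mem_compositionLists {n : ℕ} {l : List ℕ} :
    l ∈ compositionLists n ↔ l.sum = n ∧ ∀ x ∈ l, 0 < x := by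
  simp only [compositionLists, mem_image, mem_univ, true_and]
  constructor
  · rintro ⟨c, rfl⟩
    exact ⟨c.blocks_sum, fun _ => c.blocks_pos⟩
  · rintro ⟨hsum, hpos⟩
    exact ⟨⟨l, hpos _, hsum⟩, rfl⟩

theorem sum_composition_blocks {β : Type*} [AddCommMonoid β] (n : ℕ) (f : List ℕ → β) :
    ∑ c : Composition n, f c.blocks = ∑ l ∈ compositionLists n, f l :=
  (sum_image fun _ _ _ _ => Composition.ext).symm

theorem compositionLists_zero : compositionLists 0 = {[]} := by
  ext l
  simp only [mem_compositionLists, mem_singleton]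
  constructor
  · rintro ⟨hsum, hpos⟩
    exact List.eq_nil_iff_forall_not_mem.2 fun x hx =>
      (hpos x hx).ne' (Nat.eq_zero_of_le_zero (hsum ▸ List.le_sum_of_mem hx))
  · rintro rfl
    simp

theorem ne_nil_of_mem_compositionLists {n : ℕ} {l : List ℕ} (hn : n ≠ 0)
    (hl : l ∈ compositionLists n) : l ≠ [] := by
  rintro rfl
  exact hn (mem_compositionLists.1 hl).1.symm

theorem append_mem_compositionLists {a b : ℕ} {l₁ l₂ : List ℕ} (h₁ : l₁ ∈ compositionLists a)
    (h₂ : l₂ ∈ compositionLists b) : l₁ ++ l₂ ∈ compositionLists (a + b) := by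
  rw [mem_compositionLists] at *
  refine ⟨by simp [h₁.1, h₂.1], fun x hx => ?_⟩
  rcases List.mem_append.1 hx with hx | hx
  exacts [h₁.2 x hx, h₂.2 x hx]

theorem singleton_mem_compositionLists {k : ℕ} (hk : k ≠ 0) : [k] ∈ compositionLists k := by
  simp [mem_compositionLists, Nat.pos_of_ne_zero hk]

theorem sum_compositionLists_eq_sum_append_singleton {β : Type*} [AddCommMonoid β] {n : ℕ}
    (hn : n ≠ 0) (f : List ℕ → β) :
    ∑ l ∈ compositionLists n, f l =
      ∑ k ∈ Icc 1 n, ∑ l ∈ compositionLists (n - k), f (l ++ [k]) := by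
  rw [sum_sigma']
  have hsplit : ∀ l ∈ compositionLists n, l.dropLast ++ [l.getLast?.getD 0] = l := fun l hl => by
    have hne := ne_nil_of_mem_compositionLists hn hl
    rw [List.getLast?_eq_some_getLast hne, Option.getD_some, List.dropLast_append_getLast hne]
  refine sum_nbij' (fun l => ⟨l.getLast?.getD 0, l.dropLast⟩) (fun x => x.2 ++ [x.1])
    ?_ ?_ hsplit ?_ fun l hl => by rw [hsplit l hl]
  · intro l hl
    have hne := ne_nil_of_mem_compositionLists hn hl
    obtain ⟨hsum, hpos⟩ := mem_compositionLists.1 hl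
    rw [← List.dropLast_append_getLast hne] at hsum hpos
    simp only [List.getLast?_eq_some_getLast hne, Option.getD_some, mem_sigma, mem_Icc,
      mem_compositionLists]
    simp only [List.sum_append, List.sum_singleton, List.mem_append, List.mem_singleton]
      at hsum hpos
    exact ⟨⟨hpos _ (Or.inr rfl), by omega⟩, by omega, fun x hx => hpos x (Or.inl hx)⟩
  · rintro ⟨k, l⟩ hx
    simp only [mem_sigma, mem_Icc] at hx
    have happ :=
      append_mem_compositionLists hx.2 (singleton_mem_compositionLists (k := k) (by omega))
    rwa [Nat.sub_add_cancel hx.1.2] at happ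
  · rintro ⟨k, l⟩ -
    simp

theorem sum_compositionLists_sum_take_drop {β : Type*} [AddCommMonoid β] (n : ℕ)
    (h : List ℕ → List ℕ → β) :
    ∑ l ∈ compositionLists n, ∑ p ∈ range l.length, h (l.take p) (l.drop p) =
      ∑ k ∈ Icc 1 n, ∑ g ∈ compositionLists k, ∑ l ∈ compositionLists (n - k), h l g := by
  simp_rw [← sum_product']
  rw [sum_sigma', sum_sigma']
  refine sum_nbij' (fun x => ⟨(x.1.drop x.2).sum, x.1.drop x.2, x.1.take x.2⟩)
    (fun y => ⟨y.2.2 ++ y.2.1, y.2.2.length⟩) ?_ ?_ ?_ ?_ fun _ _ => rfl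
  · rintro ⟨l, p⟩ hx
    simp only [mem_sigma, mem_range, mem_product, mem_Icc, mem_compositionLists] at hx ⊢
    obtain ⟨⟨hsum, hpos⟩, hp⟩ := hx
    have hdrop : l.drop p ≠ [] := by simp; omega
    have hdrop_pos := List.sum_pos _ (fun x hx => hpos x (List.mem_of_mem_drop hx)) hdrop
    have hsplit := List.sum_take_add_sum_drop l p
    exact ⟨⟨by omega, by omega⟩, ⟨trivial, fun x hx => hpos x (List.mem_of_mem_drop hx)⟩,
      by omega, fun x hx => hpos x (List.mem_of_mem_take hx)⟩
  · rintro ⟨k, g, l⟩ hy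
    simp only [mem_sigma, mem_product, mem_Icc, mem_range] at hy ⊢
    obtain ⟨⟨hk, hkn⟩, hg, hl⟩ := hy
    have happ := append_mem_compositionLists hl hg
    rw [Nat.sub_add_cancel hkn] at happ
    have hne := ne_nil_of_mem_compositionLists (by omega) hg
    exact ⟨happ, by simp [List.length_pos_iff.2 hne]⟩
  · rintro ⟨l, p⟩ hx
    simp only [mem_sigma, mem_range] at hx
    simp [List.take_append_drop, hx.2.le]
  · rintro ⟨k, g, l⟩ hy
    simp only [mem_sigma, mem_product, mem_compositionLists] at hy
    simp [hy.2.1.1]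

theorem prod_range_length_getD {α M : Type*} [CommMonoid M] (f : α → M) (d : α) (l : List α) :
    ∏ j ∈ range l.length, f (l.getD j d) = (l.map f).prod := by
  induction l with
  | nil => simp
  | cons a t ih =>
    rw [List.length_cons, prod_range_succ']
    simp only [List.getD_cons_succ, List.getD_cons_zero, ih, List.map_cons, List.prod_cons,
      mul_comm]

theorem prod_range_length_sub_one_getD {α M : Type*} [CommMonoid M] (f : α → α → M) (d : α)
    (l : List α) :
    ∏ j ∈ range (l.length - 1), f (l.getD j d) (l.getD (j + 1) d) =
      (List.zipWith f l l.tail).prod := by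
  induction l with
  | nil => simp
  | cons a t ih =>
    cases t with
    | nil => simp
    | cons b t =>
      simp only [List.length_cons, Nat.add_sub_cancel] at ih ⊢
      rw [prod_range_succ']
      simp only [List.getD_cons_succ, List.getD_cons_zero] at ih ⊢
      rw [ih, mul_comm]
      rfl

noncomputable def mCore (l : List ℕ) : ℚ :=
  (-1) ^ (l.length + 1) * (l.map fun a => ((a ! : ℚ) * (a - 1)!)⁻¹).prod *
    (List.zipWith (fun a b : ℕ => ((a : ℚ) + b)⁻¹) l l.tail).prod

theorem mCore_singleton (a : ℕ) : mCore [a] = ((a ! : ℚ) * (a - 1)!)⁻¹ := by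
  simp [mCore]

theorem mCore_cons_cons (a b : ℕ) (t : List ℕ) :
    mCore (a :: b :: t) = -(((a ! : ℚ) * (a - 1)!)⁻¹ * ((a : ℚ) + b)⁻¹) * mCore (b :: t) := by
  simp only [mCore, List.length_cons, List.map_cons, List.prod_cons, List.tail_cons,
    List.zipWith_cons_cons, pow_succ]
  ring

theorem mJuhl_eq_factorial_mul_mCore (l : List ℕ) :
    mJuhl l = (l.sum ! : ℚ) * (l.sum - 1)! * mCore l := by
  rw [mJuhl, mCore, prod_range_length_getD (fun a => 1 / ((a ! : ℚ) * (a - 1)!)),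
    prod_range_length_sub_one_getD (fun a b : ℕ => 1 / ((a : ℚ) + b))]
  simp only [one_div]
  ring

theorem mJuhl_div_sq_factorial {G : List ℕ} (hG : G.sum ≠ 0) :
    mJuhl G / ((G.sum - 1)! : ℚ) ^ 2 = G.sum * mCore G := by
  obtain ⟨m, hm⟩ := Nat.exists_eq_succ_of_ne_zero hG
  rw [mJuhl_eq_factorial_mul_mCore, hm, Nat.factorial_succ, Nat.succ_sub_one]
  push_cast
  field_simp

theorem sum_mCore_cons_take_mul_drop (a : ℕ) (T : List ℕ) (hpos : ∀ x ∈ a :: T, 0 < x) :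
    ∑ p ∈ range T.length, mCore (a :: T.take p) * ((T.drop p).sum * mCore (T.drop p)) =
      -(((a :: T).sum : ℚ) * T.sum * mCore (a :: T)) := by
  induction T generalizing a with
  | nil => simp
  | cons b T ih =>
    have hab : (a : ℚ) + b ≠ 0 := by
      have : 0 < a := hpos a List.mem_cons_self
      positivity
    have ha : ((a ! : ℚ) * (a - 1)!) ≠ 0 := by positivity
    have hterm : ∀ p ∈ range T.length,
        mCore (a :: (b :: T).take (p + 1)) *
            (((b :: T).drop (p + 1)).sum * mCore ((b :: T).drop (p + 1))) =
          -(((a ! : ℚ) * (a - 1)!)⁻¹ * ((a : ℚ) + b)⁻¹) *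
            (mCore (b :: T.take p) * ((T.drop p).sum * mCore (T.drop p))) := fun p _ => by
      rw [List.take_succ_cons, List.drop_succ_cons, mCore_cons_cons, mul_assoc]
    rw [List.length_cons, sum_range_succ', sum_congr rfl hterm, ← mul_sum,
      ih b fun x hx => hpos x (List.mem_cons_of_mem a hx), List.take_zero, List.drop_zero,
      mCore_singleton, mCore_cons_cons]
    simp only [List.sum_cons]
    push_cast
    field_simp
    ring

noncomputable def mPrefix (N : ℕ) : List ℕ → ℚ
  | [] => 1
  | a :: t => mCore (a :: t) / (N - a)

theorem sum_mPrefix_take_mul_drop {N a : ℕ} {T : List ℕ} (hpos : ∀ x ∈ a :: T, 0 < x)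
    (haN : a ≠ N) :
    ∑ p ∈ range (a :: T).length,
        mPrefix N ((a :: T).take p) * (((a :: T).drop p).sum * mCore ((a :: T).drop p)) =
      ((a :: T).sum : ℚ) * (N - (a :: T).sum) * mPrefix N (a :: T) := by
  have hNa : (N : ℚ) - a ≠ 0 := sub_ne_zero.2 (Nat.cast_injective.ne haN.symm)
  have hterm : ∀ p ∈ range T.length,
      mPrefix N ((a :: T).take (p + 1)) *
          (((a :: T).drop (p + 1)).sum * mCore ((a :: T).drop (p + 1))) =
        ((N : ℚ) - a)⁻¹ * (mCore (a :: T.take p) * ((T.drop p).sum * mCore (T.drop p))) :=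
    fun p _ => by
      rw [List.take_succ_cons, List.drop_succ_cons, mPrefix, div_eq_inv_mul, mul_assoc]
  rw [List.length_cons, sum_range_succ', sum_congr rfl hterm, ← mul_sum,
    sum_mCore_cons_take_mul_drop a T hpos, List.take_zero, List.drop_zero, mPrefix, mPrefix]
  simp only [List.sum_cons]
  push_cast
  field_simp
  ring

noncomputable def nPrefix (N : ℕ) (J : List ℕ) : ℚ :=
  (J.map fun j => (((j - 1)! : ℚ) ^ 2)⁻¹).prod *
    ∏ p ∈ range J.length, (((J.take (p + 1)).sum : ℚ) * (N - (J.take (p + 1)).sum))⁻¹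

theorem nPrefix_nil (N : ℕ) : nPrefix N [] = 1 := by
  simp [nPrefix]

theorem nPrefix_append_singleton (N : ℕ) (J : List ℕ) (k : ℕ) :
    nPrefix N (J ++ [k]) =
      nPrefix N J * (((k - 1)! : ℚ) ^ 2)⁻¹ * (((J.sum + k : ℕ) : ℚ) * (N - (J.sum + k : ℕ)))⁻¹ := by
  have htake : ∀ p ∈ range J.length, (J ++ [k]).take (p + 1) = J.take (p + 1) := fun _ hp =>
    List.take_append_of_le_length (mem_range.1 hp)
  rw [nPrefix, nPrefix, List.length_append, List.length_singleton, prod_range_succ,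
    prod_congr rfl fun p hp => by rw [htake p hp], List.take_of_length_le (by simp)]
  simp only [List.map_append, List.prod_append, List.map_singleton, List.prod_singleton,
    List.sum_append, List.sum_singleton]
  ring

theorem nJuhl_append_singleton {N k : ℕ} {J : List ℕ} (hsum : J.sum + k = N) :
    nJuhl (J ++ [k]) = ((N - 1)! : ℚ) ^ 2 * (((k - 1)! : ℚ) ^ 2)⁻¹ * nPrefix N J := by
  have hJk : (J ++ [k]).sum = N := by simp [hsum]
  have hterm : ∀ p ∈ range J.length,
      1 / ((((J ++ [k]).take (p + 1)).sum : ℚ) * (((J ++ [k]).drop (p + 1)).sum : ℚ)) =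
        (((J.take (p + 1)).sum : ℚ) * (N - (J.take (p + 1)).sum))⁻¹ := by
    intro p hp
    have hsplit := List.sum_take_add_sum_drop (J ++ [k]) (p + 1)
    have htake : (J ++ [k]).take (p + 1) = J.take (p + 1) :=
      List.take_append_of_le_length (mem_range.1 hp)
    rw [htake, hJk] at hsplit
    rw [htake, one_div, ← hsplit]
    push_cast
    ring
  rw [nJuhl, nPrefix, hJk, prod_range_length_getD (fun j => 1 / (((j - 1)! : ℚ)) ^ 2),
    List.length_append, List.length_singleton, Nat.add_sub_cancel, prod_congr rfl hterm]
  simp only [List.map_append, List.prod_append, List.map_singleton, List.prod_singleton, one_div]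
  ring

section Transform

variable {A : Type*} [Ring A] [Algebra ℚ A]

theorem sum_smul_prod_append_singleton (M : ℕ → A) (s : Finset (List ℕ)) (k : ℕ)
    (c d : List ℕ → ℚ) (r : ℚ) (h : ∀ J ∈ s, c (J ++ [k]) = r * d J) :
    ∑ J ∈ s, c (J ++ [k]) • ((J ++ [k]).map M).prod =
      r • ((∑ J ∈ s, d J • (J.map M).prod) * M k) := by
  rw [sum_mul, smul_sum]
  refine sum_congr rfl fun J hJ => ?_
  rw [h J hJ, List.map_append, List.prod_append, List.map_singleton, List.prod_singleton,
    smul_mul_assoc, smul_smul]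

noncomputable def mTransform (P : ℕ → A) (n : ℕ) : A :=
  ∑ c : Composition n, mJuhl c.blocks • (c.blocks.map P).prod

variable (P M : ℕ → A) (N : ℕ)

noncomputable def mPrefixSum (σ : ℕ) : A :=
  ∑ J ∈ compositionLists σ, mPrefix N J • (J.map P).prod

theorem mPrefixSum_zero : mPrefixSum P N 0 = 1 := by
  simp [mPrefixSum, compositionLists_zero, mPrefix]

variable {P M}

theorem sum_smul_mPrefixSum_mul_eq_sum
    (hM : ∀ n, 1 ≤ n → M n = mTransform P n)
    (σ : ℕ) :
    ∑ k ∈ Icc 1 σ, (((k - 1)! : ℚ) ^ 2)⁻¹ • (mPrefixSum P N (σ - k) * M k) =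
      ∑ l ∈ compositionLists σ,
        (∑ p ∈ range l.length, mPrefix N (l.take p) * ((l.drop p).sum * mCore (l.drop p))) •
          (l.map P).prod := by
  have hterm : ∀ k ∈ Icc 1 σ, (((k - 1)! : ℚ) ^ 2)⁻¹ • (mPrefixSum P N (σ - k) * M k) =
      ∑ g ∈ compositionLists k, ∑ l ∈ compositionLists (σ - k),
        (mPrefix N l * (g.sum * mCore g)) • ((l ++ g).map P).prod := by
    intro k hk
    rw [hM k (mem_Icc.1 hk).1, mTransform,
      sum_composition_blocks k fun g => mJuhl g • (g.map P).prod, mPrefixSum, sum_mul_sum,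
      sum_comm, smul_sum]
    refine sum_congr rfl fun g hg => ?_
    have hgk : g.sum = k := (mem_compositionLists.1 hg).1
    rw [smul_sum]
    refine sum_congr rfl fun l _ => ?_
    rw [← mJuhl_div_sq_factorial (hgk ▸ Nat.one_le_iff_ne_zero.1 (mem_Icc.1 hk).1), hgk,
      List.map_append, List.prod_append, smul_mul_smul_comm, smul_smul, div_eq_mul_inv]
    congr 1
    ring
  rw [sum_congr rfl hterm, ← sum_compositionLists_sum_take_drop]
  refine sum_congr rfl fun l _ => ?_
  simp only [List.take_append_drop, ← sum_smul]

theorem sum_smul_mPrefixSum_mul_of_lt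
    (hM : ∀ n, 1 ≤ n → M n = mTransform P n)
    {σ : ℕ} (hσ : σ ≠ 0) (hσN : σ < N) :
    ∑ k ∈ Icc 1 σ, (((k - 1)! : ℚ) ^ 2)⁻¹ • (mPrefixSum P N (σ - k) * M k) =
      ((σ : ℚ) * (N - σ)) • mPrefixSum P N σ := by
  rw [sum_smul_mPrefixSum_mul_eq_sum N hM, mPrefixSum, smul_sum]
  refine sum_congr rfl fun l hl => ?_
  obtain ⟨hsum, hpos⟩ := mem_compositionLists.1 hl
  obtain ⟨a, T, rfl⟩ := List.exists_cons_of_ne_nil (ne_nil_of_mem_compositionLists hσ hl)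
  have haN : a ≠ N := by
    have := List.le_sum_of_mem (List.mem_cons_self (a := a) (l := T))
    omega
  rw [sum_mPrefix_take_mul_drop hpos haN, hsum, smul_smul]

theorem sum_smul_mPrefixSum_mul_self
    (hM : ∀ n, 1 ≤ n → M n = mTransform P n)
    (hN : N ≠ 0) :
    ∑ k ∈ Icc 1 N, (((k - 1)! : ℚ) ^ 2)⁻¹ • (mPrefixSum P N (N - k) * M k) =
      (((N - 1)! : ℚ) ^ 2)⁻¹ • P N := by
  rw [sum_smul_mPrefixSum_mul_eq_sum N hM,
    sum_eq_single_of_mem [N] (singleton_mem_compositionLists hN)]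
  · have hfact : (N : ℚ) * (N - 1)! = N ! := by exact_mod_cast Nat.mul_factorial_pred hN
    simp only [List.length_singleton, sum_range_one, List.take_zero, List.drop_zero, mPrefix,
      List.sum_singleton, mCore_singleton, List.map_singleton, List.prod_singleton, one_mul]
    congr 1
    rw [← hfact]
    field_simp
  · intro l hl hlN
    obtain ⟨hsum, hpos⟩ := mem_compositionLists.1 hl
    obtain ⟨a, T, rfl⟩ := List.exists_cons_of_ne_nil (ne_nil_of_mem_compositionLists hN hl)
    have haN : a ≠ N := by
      rintro rfl
      refine hlN (List.cons_eq_cons.2 ⟨rfl, ?_⟩)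
      by_contra hT
      have := List.sum_pos T (fun x hx => hpos x (List.mem_cons_of_mem a hx)) hT
      simp only [List.sum_cons] at hsum
      omega
    rw [sum_mPrefix_take_mul_drop hpos haN, hsum, sub_self, mul_zero, zero_mul, zero_smul]

theorem sum_nPrefix_smul_prod
    (hM : ∀ n, 1 ≤ n → M n = mTransform P n)
    (σ : ℕ) (hσN : σ < N) :
    ∑ J ∈ compositionLists σ, nPrefix N J • (J.map M).prod = mPrefixSum P N σ := by
  induction σ using Nat.strong_induction_on with
  | _ σ ih =>
    rcases Nat.eq_zero_or_pos σ with rfl | hσ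
    · simp [compositionLists_zero, nPrefix_nil, mPrefixSum_zero]
    have hσN' : (σ : ℚ) * (N - σ) ≠ 0 :=
      mul_ne_zero (by positivity) (sub_ne_zero.2 (by exact_mod_cast hσN.ne'))
    rw [sum_compositionLists_eq_sum_append_singleton hσ.ne',
      ← inv_smul_smul₀ hσN' (mPrefixSum P N σ),
      ← sum_smul_mPrefixSum_mul_of_lt N hM hσ.ne' hσN, smul_sum]
    refine sum_congr rfl fun k hk => ?_
    obtain ⟨hk, hkσ⟩ := mem_Icc.1 hk
    rw [← ih (σ - k) (by omega) (by omega), smul_smul]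
    refine sum_smul_prod_append_singleton M _ k _ _ _ fun J hJ => ?_
    rw [nPrefix_append_singleton, (mem_compositionLists.1 hJ).1, Nat.sub_add_cancel hkσ]
    ring

end Transform

end Juhl

open Juhl in
/-- Inversion of the `n` and `m` transforms: if `M̄_{2N} = ∑_{|I|=N} m_I P_{2I}`, then
`P_{2N} = ∑_{|I|=N} n_I M̄_{2I}`, sums over compositions of `N`. -/
theorem nJuhl_mJuhl_inversion (A : Type*) [Ring A] [Algebra ℚ A] (P M : ℕ → A)
    (hM : ∀ N : ℕ, 1 ≤ N →
      M N = ∑ c : Composition N, mJuhl c.blocks • (c.blocks.map P).prod) :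
    ∀ N : ℕ, 1 ≤ N →
      P N = ∑ c : Composition N, nJuhl c.blocks • (c.blocks.map M).prod := by
  intro N hN
  have hN0 : N ≠ 0 := Nat.one_le_iff_ne_zero.1 hN
  have hfact : ((N - 1)! : ℚ) ^ 2 ≠ 0 := by positivity
  rw [sum_composition_blocks N fun l => nJuhl l • (l.map M).prod,
    sum_compositionLists_eq_sum_append_singleton hN0,
    ← smul_inv_smul₀ hfact (P N), ← sum_smul_mPrefixSum_mul_self N hM hN0, smul_sum]
  refine sum_congr rfl fun k hk => ?_
  obtain ⟨hk, hkN⟩ := mem_Icc.1 hk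
  rw [← sum_nPrefix_smul_prod N hM (N - k) (by omega), smul_smul]
  refine (sum_smul_prod_append_singleton M _ k _ _ _ fun J hJ => ?_).symm
  exact nJuhl_append_singleton (by rw [(mem_compositionLists.1 hJ).1, Nat.sub_add_cancel hkN])
end

section
/- With x_1, x_2, ... noncommuting indeterminates and L_k = s d²/ds² − k d/ds + X(s) where X(s) = ∑_{a≥1} x_a s^{a−1}, for any N ≥ 1 and any integer a with 1 ≤ a ≤ N: L_{1−N} L_{3−N} ⋯ L_{N−3} (s^{a−1}) |_{s=0} = ∑_{|I|=N−a} n̄_{(I,a)} x_{I_1}⋯x_{I_r}, where the sum is over compositions I of N−a (including the empty composition when a = N, contributing n̄_{(a)} = 1 times the empty product), and n̄_{(I,a)} = (N−1)!² / ∏_{k=1}^{r} ((∑_{j=1}^k (I,a)_j)(∑_{j=k+1}^{r+1} (I,a)_j)) with (I,a) = (I_1,...,I_r,a). -/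
open Finset

/-!
Let `T_n = ∑_{I ⊨ n} (∏_k S_k (N - S_k))⁻¹ x_I` (`compSum N n`), where the `S_k` are the partial
sums of `I`. Splitting off the last block of `I` gives `n (N - n) T_n = ∑_{b ≤ n} T_{n-b} x_b`,
and this recursion is exactly what makes the functional `u ↦ ∑_p T_{m-p} u_p` absorb one operator:
`∑_p T_{m-p} (L_{2m+1-N} u)_p = (m+1)(N-m-1) ∑_q T_{m+1-q} u_q`. Iterating over the `N - 1`
operators, the product applied to `s^{a-1}` has constant term `∏_{k=1}^{N-1} k (N-k) T_{N-a}
= (N-1)!² T_{N-a}`, and `(N-1)!²` times the weight of `I` is `n̄_{(I,a)}`.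
-/

theorem sum_range_sum_range_succ_eq {M : Type*} [AddCommMonoid M] (n : ℕ) (F : ℕ → ℕ → M) :
    ∑ p ∈ range n, ∑ i ∈ range (p + 1), F p i
      = ∑ q ∈ range n, ∑ i ∈ range (n - q), F (q + i) i := by
  rw [sum_comm' (t' := range n) (s' := fun i => Ico i n) (by intros; simp; omega)]
  simp_rw [sum_Ico_eq_sum_range]
  rw [sum_comm' (t' := range n) (s' := fun q => range (n - q)) (by intros; simp; omega)]
  simp_rw [add_comm]

namespace Composition

theorem sigma_ext {n : ℕ} {x y : Σ i, Composition (n - i)} (h₁ : x.1 = y.1)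
    (h₂ : x.2.blocks = y.2.blocks) : x = y := by
  obtain ⟨i, c⟩ := x
  obtain ⟨j, d⟩ := y
  dsimp only at h₁ h₂
  subst h₁
  exact congrArg _ (Composition.ext h₂)

theorem sum_eq_sum_range_sum_append {M : Type*} [AddCommMonoid M] (n : ℕ) (F : List ℕ → M) :
    ∑ c : Composition (n + 1), F c.blocks
      = ∑ i ∈ range (n + 1), ∑ c : Composition (n - i), F (c.blocks ++ [i + 1]) := by
  have hne (c : Composition (n + 1)) : c.blocks ≠ [] := by simp [blocks_eq_nil]
  have hsum (c : Composition (n + 1)) :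
      c.blocks.dropLast.sum + c.blocks.getLast (hne c) = n + 1 := by
    simpa [c.blocks_sum] using congrArg List.sum (List.dropLast_append_getLast (hne c))
  have hpos (c : Composition (n + 1)) : 0 < c.blocks.getLast (hne c) :=
    c.blocks_pos (List.getLast_mem _)
  rw [← sum_sigma (range (n + 1)) (fun _ => univ)
    (fun x : (Σ i, Composition (n - i)) => F (x.2.blocks ++ [x.1 + 1]))]
  refine (sum_bij'
    (fun x hx => ⟨x.2.blocks ++ [x.1 + 1],
      fun hi => by
        rcases List.mem_append.1 hi with hi | hi
        exacts [x.2.blocks_pos hi, by simp_all],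
      by
        have := x.2.blocks_sum
        simp only [mem_sigma, mem_range] at hx
        simp only [List.sum_append, List.sum_singleton]
        omega⟩)
    (fun c _ => ⟨c.blocks.getLast (hne c) - 1, ⟨c.blocks.dropLast,
      fun hi => c.blocks_pos (List.dropLast_subset _ hi),
      by have := hsum c; have := hpos c; omega⟩⟩) ?_ ?_ ?_ ?_ (fun _ _ => rfl)).symm
  · simp
  · intro c _
    have := hsum c
    simp only [mem_sigma, mem_range, mem_univ, and_true]
    omega
  · intro x _
    exact sigma_ext (by simp) List.dropLast_concat
  · intro c _
    ext1
    dsimp only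
    rw [Nat.sub_add_cancel (hpos c), List.dropLast_append_getLast]

end Composition

noncomputable def partialSumProd (N : ℕ) (l : List ℕ) : ℚ :=
  ∏ k ∈ range l.length, ((l.take (k + 1)).sum : ℚ) * (N - (l.take (k + 1)).sum)

theorem partialSumProd_append_singleton (N : ℕ) (l : List ℕ) (b : ℕ) :
    partialSumProd N (l ++ [b])
      = partialSumProd N l * (((l.sum + b : ℕ) : ℚ) * (N - (l.sum + b : ℕ))) := by
  rw [partialSumProd, List.length_append, List.length_singleton, prod_range_succ,
    List.take_of_length_le (by simp), List.sum_append, List.sum_singleton, partialSumProd]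
  congr 1
  refine prod_congr rfl fun k hk => ?_
  rw [List.take_append_of_le_length (by simpa using hk)]

noncomputable def compSum (N n : ℕ) : FreeAlgebra ℚ ℕ :=
  ∑ c : Composition n, (partialSumProd N c.blocks)⁻¹ • (c.blocks.map (FreeAlgebra.ι ℚ)).prod

theorem compSum_zero (N : ℕ) : compSum N 0 = 1 := by
  rw [compSum, Fintype.sum_eq_single (Composition.ones 0)
    fun c hc => (hc (Composition.ext (by simp [Composition.blocks_eq_nil]))).elim]
  simp [partialSumProd]

theorem sum_compSum_mul_ι {N n : ℕ} (hn : n ≠ N) :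
    ∑ i ∈ range n, compSum N (n - 1 - i) * FreeAlgebra.ι ℚ (i + 1)
      = ((n : ℚ) * (N - n)) • compSum N n := by
  rcases n with _ | n
  · simp
  have hne : ((n + 1 : ℕ) : ℚ) * (N - (n + 1 : ℕ)) ≠ 0 :=
    mul_ne_zero (by positivity) (sub_ne_zero.2 (by exact_mod_cast hn.symm))
  rw [compSum, Composition.sum_eq_sum_range_sum_append n
    (fun l => (partialSumProd N l)⁻¹ • (l.map (FreeAlgebra.ι ℚ)).prod), smul_sum]
  refine sum_congr rfl fun i hi => ?_
  rw [Nat.add_sub_cancel, compSum, sum_mul, smul_sum]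
  refine sum_congr rfl fun c _ => ?_
  have hS : c.blocks.sum + (i + 1) = n + 1 := by
    have := c.blocks_sum
    have := mem_range.1 hi
    omega
  rw [partialSumProd_append_singleton, hS, List.map_append, List.prod_append, List.map_singleton,
    List.prod_singleton, smul_mul_assoc, smul_smul, mul_inv, mul_left_comm, mul_inv_cancel₀ hne,
    mul_one]

theorem sum_compSum_mul_Lop {N m : ℕ} (hm : m + 1 < N) (u : ℕ → FreeAlgebra ℚ ℕ) :
    ∑ p ∈ range (m + 1), compSum N (m - p) * Lop (2 * m + 1 - N) u p
      = (((m + 1 : ℕ) : ℚ) * (N - (m + 1 : ℕ)))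
          • ∑ q ∈ range (m + 2), compSum N (m + 1 - q) * u q := by
  have hA : ∑ p ∈ range (m + 1), compSum N (m - p)
        * ((p * (p + 1) - ((2 * m + 1 - N : ℤ) : ℚ) * (p + 1) : ℚ) • u (p + 1))
      = ∑ q ∈ range (m + 2),
          ((q : ℚ) * (q + N - 2 * (m + 1 : ℕ))) • (compSum N (m + 1 - q) * u q) := by
    rw [sum_range_succ' _ (m + 1)]
    simp only [Nat.cast_zero, zero_mul, zero_smul, add_zero, Nat.add_sub_add_right, mul_smul_comm]
    refine sum_congr rfl fun p _ => ?_
    congr 1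
    push_cast
    ring
  have hB : ∑ p ∈ range (m + 1), compSum N (m - p)
        * ∑ i ∈ range (p + 1), FreeAlgebra.ι ℚ (i + 1) * u (p - i)
      = ∑ q ∈ range (m + 2), (((m + 1 - q : ℕ) : ℚ) * (N - (m + 1 - q : ℕ)))
          • (compSum N (m + 1 - q) * u q) := by
    simp_rw [mul_sum]
    rw [sum_range_sum_range_succ_eq, sum_range_succ _ (m + 1)]
    simp only [Nat.sub_self, Nat.cast_zero, zero_mul, zero_smul, add_zero]
    refine sum_congr rfl fun q hq => ?_
    have hq : q < m + 1 := mem_range.1 hq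
    rw [← smul_mul_assoc, ← sum_compSum_mul_ι (by omega), sum_mul]
    refine sum_congr rfl fun i hi => ?_
    have hi : i < m + 1 - q := mem_range.1 hi
    rw [Nat.add_sub_cancel, ← mul_assoc]
    congr 3
    omega
  simp only [Lop, mul_add (compSum N _), sum_add_distrib, hA, hB]
  rw [← sum_add_distrib, smul_sum]
  refine sum_congr rfl fun q hq => ?_
  rw [← add_smul]
  have hq : q ≤ m + 1 := Nat.lt_succ_iff.1 (mem_range.1 hq)
  congr 1
  push_cast [hq]
  ring

theorem foldl_Lop_apply_zero {N j m : ℕ} (h : j + m + 1 = N) (u : ℕ → FreeAlgebra ℚ ℕ) :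
    (List.range' j m).foldl (fun u (i : ℕ) => Lop ((N : ℤ) - 3 - 2 * (i : ℤ)) u) u 0
      = (∏ k ∈ range m, (((k + 1 : ℕ) : ℚ) * (N - (k + 1 : ℕ))))
          • ∑ p ∈ range (m + 1), compSum N (m - p) * u p := by
  induction m generalizing j u with
  | zero => simp [compSum_zero]
  | succ m ih =>
    have hk : (N : ℤ) - 3 - 2 * (j : ℤ) = 2 * m + 1 - N := by omega
    rw [List.range'_succ, List.foldl_cons, ih (by omega), hk, sum_compSum_mul_Lop (by omega),
      smul_smul, prod_range_succ]

theorem prod_range_succ_mul_sub_succ (N : ℕ) :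
    ∏ k ∈ range (N - 1), (((k + 1 : ℕ) : ℚ) * (N - (k + 1 : ℕ)))
      = ((N - 1).factorial : ℚ) ^ 2 := by
  have hrefl : ∏ k ∈ range (N - 1), ((N : ℚ) - (k + 1 : ℕ))
      = ∏ k ∈ range (N - 1), ((N - 1 - 1 - k + 1 : ℕ) : ℚ) :=
    prod_congr rfl fun k hk => by
      have := mem_range.1 hk
      rw [show N - 1 - 1 - k + 1 = N - (k + 1) by omega, Nat.cast_sub (by omega)]
  rw [prod_mul_distrib, hrefl, prod_range_reflect (fun k => ((k + 1 : ℕ) : ℚ)), ← Nat.cast_prod,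
    prod_range_add_one_eq_factorial, sq]

theorem nbar_append_singleton {N a : ℕ} (l : List ℕ) (h : l.sum + a = N) :
    nbar N (l ++ [a]) = ((N - 1).factorial : ℚ) ^ 2 / partialSumProd N l := by
  rw [nbar, partialSumProd, List.length_append, List.length_singleton, Nat.add_sub_cancel]
  congr 1
  refine prod_congr rfl fun k hk => ?_
  have hk := mem_range.1 hk
  have hsplit := congrArg List.sum (List.take_append_drop (k + 1) l)
  rw [List.sum_append] at hsplit
  rw [List.take_append_of_le_length (by omega), List.drop_append_of_le_length (by omega),
    List.sum_append, List.sum_singleton]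
  congr 1
  rw [eq_sub_iff_add_eq]
  exact_mod_cast (by omega : _ + _ = N)

theorem Lop_iterate_pow_general (N a : ℕ) (ha : 1 ≤ a) (haN : a ≤ N) :
    ((List.range (N - 1)).foldl (fun u i => Lop ((N : ℤ) - 3 - 2 * (i : ℤ)) u)
        (fun j => if j = a - 1 then 1 else 0)) 0
      = ∑ c : Composition (N - a),
          nbar N (c.blocks ++ [a]) • (c.blocks.map (FreeAlgebra.ι ℚ)).prod := by
  -- the cast `(i : ℤ)` makes `List.range (N - 1)` elaborate as a list of integers (a monadic map)
  simp only [List.bind_eq_flatMap, List.pure_def, ← List.map_eq_flatMap, List.foldl_map]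
  rw [List.range_eq_range', foldl_Lop_apply_zero (by omega : 0 + (N - 1) + 1 = N),
    prod_range_succ_mul_sub_succ]
  simp only [mul_ite, mul_one, mul_zero, sum_ite_eq', mem_range,
    if_pos (by omega : a - 1 < N - 1 + 1)]
  rw [show N - 1 - (a - 1) = N - a by omega, compSum, smul_sum]
  refine sum_congr rfl fun c _ => ?_
  rw [smul_smul, nbar_append_singleton c.blocks (by rw [c.blocks_sum]; omega), div_eq_mul_inv]

/-- Proposition `modrecurcons` (combinatorial form): for `1 ≤ a ≤ N`,
`L_{1-N} L_{3-N} ⋯ L_{N-3} (s^{a-1}) |_{s=0} = ∑_{|I|=N-a} n̄_{(I,a)} x_{I_1} ⋯ x_{I_r}`,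
the sum being over all compositions `I` of `N - a` (including the empty one when `a = N`). -/
theorem Lop_iterate_pow (N a : ℕ) (hN : 1 ≤ N) (ha : 1 ≤ a) (haN : a ≤ N) :
    ((List.range (N - 1)).foldl (fun u i => Lop ((N : ℤ) - 3 - 2 * (i : ℤ)) u)
        (fun j => if j = a - 1 then 1 else 0)) 0
      = ∑ c : Composition (N - a),
          nbar N (c.blocks ++ [a]) • (c.blocks.map (FreeAlgebra.ι ℚ)).prod :=
  Lop_iterate_pow_general N a ha haN
end

section
/- Define rational numbers c_{j,l} for j ≥ 0, 0 ≤ l ≤ r by: c_{0,0} = 1; c_{j,0} = 0 for j ≥ 1; c_{0,l} = 0 for l ≥ 1; and the recursion c_{j+1,l} = −(m_l − j)(N − m_l − j) c_{j,l} + c_{j,l−1} for j ≥ 0, 1 ≤ l ≤ r, where 1 ≤ m_1 < m_2 < ⋯ < m_r = N are fixed integers. Then c_{N,r} = (N−1)!² / ∏_{k=1}^{r−1} (m_k (N − m_k)). -/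
/-!
Write `λ_t = t (N - t)` and `μ_l = λ_{m_l}`, so that the recursion reads
`c_{j+1,l} = (λ_j - μ_l) c_{j,l} + c_{j,l-1}`. Pair the vector `c_j` with the adjoint solution `π_j`,
which runs backwards from `π_N = e_r` via `π_{j,l} = (λ_j - μ_l) π_{j+1,l} + π_{j+1,l+1}`: the pairing
`∑_l π_{j,l} c_{j,l}` is constant for `j ≥ 1`, so `c_{N,r} = π_{1,1}`. Because `λ_j - μ_l` vanishes at
`j = m_l`, the adjoint has the closed form `μ_l ⋯ μ_{r-1} π_{j,l} = λ_j ⋯ λ_{N-1}` whenever `j ≤ m_l`,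
and at `j = l = 1` the right side is `(N-1)!²`.
-/

open Finset

namespace BidiagonalRecursion

variable {a : ℕ → ℕ → ℚ} {n r : ℕ}

def adjoint (a : ℕ → ℕ → ℚ) (n r j l : ℕ) : ℚ :=
  if j < n then a j l * adjoint a n r (j + 1) l + adjoint a n r (j + 1) (l + 1)
  else if l = r then 1 else 0
termination_by n - j

lemma adjoint_of_lt {j : ℕ} (hj : j < n) (l : ℕ) :
    adjoint a n r j l = a j l * adjoint a n r (j + 1) l + adjoint a n r (j + 1) (l + 1) := by
  rw [adjoint, if_pos hj]

lemma adjoint_of_le {j : ℕ} (hj : n ≤ j) (l : ℕ) :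
    adjoint a n r j l = if l = r then 1 else 0 := by
  rw [adjoint, if_neg (not_lt.2 hj)]

lemma adjoint_eq_zero_of_lt (j : ℕ) {l : ℕ} (hl : r < l) : adjoint a n r j l = 0 := by
  rcases lt_or_ge j n with hj | hj
  · rw [adjoint_of_lt hj, adjoint_eq_zero_of_lt (j + 1) hl,
      adjoint_eq_zero_of_lt (j + 1) (Nat.lt_succ_of_lt hl), mul_zero, add_zero]
  · rw [adjoint_of_le hj, if_neg hl.ne']
termination_by n - j

variable {c : ℕ → ℕ → ℚ}

lemma sum_adjoint_mul_succ
    (hrec : ∀ j l, 1 ≤ l → l ≤ r → c (j + 1) l = a j l * c j l + c j (l - 1))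
    {j : ℕ} (hj : j < n) (hcj : c j 0 = 0) :
    ∑ i ∈ range r, adjoint a n r (j + 1) (i + 1) * c (j + 1) (i + 1)
      = ∑ i ∈ range r, adjoint a n r j (i + 1) * c j (i + 1) := by
  have hshift : ∑ i ∈ range r, adjoint a n r (j + 1) (i + 1) * c j i
      = ∑ i ∈ range r, adjoint a n r (j + 1) (i + 1 + 1) * c j (i + 1) := by
    have h₀ := sum_range_succ (fun i => adjoint a n r (j + 1) (i + 1) * c j i) r
    have h₁ := sum_range_succ' (fun i => adjoint a n r (j + 1) (i + 1) * c j i) r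
    rw [adjoint_eq_zero_of_lt _ (Nat.lt_add_one r), zero_mul, add_zero] at h₀
    rw [hcj, mul_zero, add_zero] at h₁
    exact h₀.symm.trans h₁
  calc ∑ i ∈ range r, adjoint a n r (j + 1) (i + 1) * c (j + 1) (i + 1)
      = ∑ i ∈ range r, (a j (i + 1) * adjoint a n r (j + 1) (i + 1) * c j (i + 1)
          + adjoint a n r (j + 1) (i + 1) * c j i) := by
        refine sum_congr rfl fun i hi => ?_
        rw [hrec j (i + 1) (Nat.le_add_left 1 i) (mem_range.1 hi), Nat.add_sub_cancel]
        ring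
    _ = ∑ i ∈ range r, (a j (i + 1) * adjoint a n r (j + 1) (i + 1) * c j (i + 1)
          + adjoint a n r (j + 1) (i + 1 + 1) * c j (i + 1)) := by
        rw [sum_add_distrib, sum_add_distrib, hshift]
    _ = ∑ i ∈ range r, adjoint a n r j (i + 1) * c j (i + 1) := by
        refine sum_congr rfl fun i _ => ?_
        rw [adjoint_of_lt hj]
        ring

theorem eq_adjoint_one_one (hn : 1 ≤ n) (hr : 1 ≤ r)
    (hc00 : c 0 0 = 1) (hcj0 : ∀ j, 1 ≤ j → c j 0 = 0) (hc0l : ∀ l, 1 ≤ l → l ≤ r → c 0 l = 0)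
    (hrec : ∀ j l, 1 ≤ l → l ≤ r → c (j + 1) l = a j l * c j l + c j (l - 1)) :
    c n r = adjoint a n r 1 1 := by
  set S := fun j => ∑ i ∈ range r, adjoint a n r j (i + 1) * c j (i + 1)
  have hS : ∀ j, 1 ≤ j → j ≤ n → S j = S 1 := by
    intro j hj
    induction j, hj using Nat.le_induction with
    | base => exact fun _ => rfl
    | succ j hj ih =>
      intro hjn
      rw [← ih (Nat.le_of_succ_le hjn)]
      exact sum_adjoint_mul_succ hrec hjn (hcj0 j hj)
  have hSn : S n = c n r := by
    dsimp only [S]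
    rw [sum_eq_single (r - 1), adjoint_of_le le_rfl, Nat.sub_add_cancel hr, if_pos rfl, one_mul]
    · intro i hi hne
      rw [adjoint_of_le le_rfl, if_neg (by grind), zero_mul]
    · exact fun h => absurd (mem_range.2 (Nat.sub_lt hr one_pos)) h
  have hS1 : S 1 = adjoint a n r 1 1 := by
    dsimp only [S]
    rw [sum_eq_single 0, zero_add, hrec 0 1 le_rfl hr, hc0l 1 le_rfl hr, Nat.sub_self, hc00,
      mul_zero, zero_add, mul_one]
    · intro i hi hne
      rw [hrec 0 (i + 1) (Nat.le_add_left 1 i) (mem_range.1 hi), hc0l (i + 1) (by omega)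
        (mem_range.1 hi), Nat.add_sub_cancel, hc0l i (by omega) (by grind)]
      ring
    · exact fun h => absurd (mem_range.2 hr) h
  rw [← hSn, hS n hn le_rfl, hS1]

end BidiagonalRecursion

open BidiagonalRecursion

def mulCompl (N t : ℕ) : ℚ := t * ((N : ℚ) - t)

def recCoeff (N : ℕ) (m : ℕ → ℕ) (j l : ℕ) : ℚ := mulCompl N j - mulCompl N (m l)

lemma mulCompl_self (N : ℕ) : mulCompl N N = 0 := by
  rw [mulCompl, sub_self, mul_zero]

lemma mulCompl_ne_zero {N t : ℕ} (ht : 0 < t) (htN : t < N) : mulCompl N t ≠ 0 :=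
  mul_ne_zero (Nat.cast_ne_zero.2 ht.ne') (sub_ne_zero.2 (Nat.cast_lt.2 htN).ne')

lemma prod_mulCompl_Ico_one (N : ℕ) :
    ∏ t ∈ Ico 1 N, mulCompl N t = ((N - 1).factorial : ℚ) ^ 2 := by
  rcases N with _ | M
  · simp
  have hid : ∏ t ∈ Ico 1 (M + 1), (t : ℚ) = M.factorial := by
    rw [← Nat.cast_prod, prod_Ico_id_eq_factorial]
  have hreflect : ∏ t ∈ Ico 1 (M + 1), ((M + 1 : ℕ) - t : ℚ) = ∏ t ∈ Ico 1 (M + 1), (t : ℚ) := by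
    rw [prod_congr rfl fun t ht => (Nat.cast_sub (mem_Ico.1 ht).2.le).symm,
      prod_Ico_reflect (fun t => (t : ℚ)) 1 (Nat.le_succ _)]
    simp
  simp only [mulCompl, prod_mul_distrib, hreflect, hid, Nat.add_sub_cancel, sq]

theorem prod_mul_adjoint_eq {N r : ℕ} {m : ℕ → ℕ} (hm : StrictMonoOn m (Set.Icc 1 r))
    (hmr : m r = N) (j : ℕ) {l : ℕ} (hl : 1 ≤ l) (hlr : l ≤ r) (hjl : j ≤ m l) :
    (∏ k ∈ Ico l r, mulCompl N (m k)) * adjoint (recCoeff N m) N r j l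
      = ∏ t ∈ Ico j N, mulCompl N t := by
  have hm_lt : l < r → m l < N := fun h => hmr ▸ hm ⟨hl, hlr⟩ ⟨hl.trans hlr, le_rfl⟩ h
  rcases lt_or_ge j N with hj | hj
  · have hdiag : recCoeff N m j l * ((∏ k ∈ Ico l r, mulCompl N (m k))
          * adjoint (recCoeff N m) N r (j + 1) l)
        = recCoeff N m j l * ∏ t ∈ Ico (j + 1) N, mulCompl N t := by
      rcases hjl.lt_or_eq with hjl | rfl
      · rw [prod_mul_adjoint_eq hm hmr (j + 1) hl hlr hjl]
      · rw [recCoeff, sub_self, zero_mul, zero_mul]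
    have hnext : (∏ k ∈ Ico l r, mulCompl N (m k)) * adjoint (recCoeff N m) N r (j + 1) (l + 1)
        = mulCompl N (m l) * ∏ t ∈ Ico (j + 1) N, mulCompl N t := by
      rcases hlr.lt_or_eq with hlr | rfl
      · have hll : m l < m (l + 1) := hm ⟨hl, hlr.le⟩ ⟨by omega, hlr⟩ (Nat.lt_add_one l)
        rw [prod_eq_prod_Ico_succ_bot hlr, mul_assoc,
          prod_mul_adjoint_eq hm hmr (j + 1) (by omega) hlr (hjl.trans_lt hll)]
      · rw [adjoint_eq_zero_of_lt _ (Nat.lt_add_one l), hmr, mulCompl_self, mul_zero, zero_mul]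
    rw [adjoint_of_lt hj, mul_add, mul_left_comm, hdiag, hnext, prod_eq_prod_Ico_succ_bot hj,
      recCoeff]
    ring
  · obtain rfl : l = r := by_contra fun h => absurd (hm_lt (lt_of_le_of_ne hlr h)) (by omega)
    rw [adjoint_of_le hj, if_pos rfl, Ico_self, Ico_eq_empty_of_le hj, prod_empty, prod_empty,
      mul_one]
termination_by N - j

theorem c_N_r_eq_general (N r : ℕ) (hr : 1 ≤ r) (m : ℕ → ℕ)
    (hm1 : 1 ≤ m 1) (hmono : ∀ k l, 1 ≤ k → k < l → l ≤ r → m k < m l) (hmr : m r = N)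
    (c : ℕ → ℕ → ℚ)
    (hc00 : c 0 0 = 1)
    (hcj0 : ∀ j, 1 ≤ j → c j 0 = 0)
    (hc0l : ∀ l, 1 ≤ l → l ≤ r → c 0 l = 0)
    (hrec : ∀ j l, 1 ≤ l → l ≤ r →
      c (j+1) l = -((m l : ℚ) - (j : ℚ)) * ((N : ℚ) - (m l : ℚ) - (j : ℚ)) * c j l
        + c j (l-1)) :
    c N r = ((Nat.factorial (N - 1) : ℚ))^2
        / ∏ k ∈ Finset.Icc 1 (r - 1), ((m k : ℚ) * ((N : ℚ) - (m k : ℚ))) := by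
  have hm : StrictMonoOn m (Set.Icc 1 r) := fun k hk l hl hkl => hmono k l hk.1 hkl hl.2
  have hm_pos : ∀ k, 1 ≤ k → k ≤ r → 1 ≤ m k := fun k hk hkr =>
    hm1.trans (hm.monotoneOn ⟨le_rfl, hr⟩ ⟨hk, hkr⟩ hk)
  have hN : 1 ≤ N := hmr ▸ hm_pos r hr le_rfl
  have hc : c N r = adjoint (recCoeff N m) N r 1 1 :=
    eq_adjoint_one_one hN hr hc00 hcj0 hc0l fun j l hl hlr => by
      rw [hrec j l hl hlr, recCoeff, mulCompl, mulCompl]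
      ring
  have hne : ∏ k ∈ Ico 1 r, mulCompl N (m k) ≠ 0 := prod_ne_zero_iff.2 fun k hk => by
    obtain ⟨hk1, hkr⟩ := mem_Ico.1 hk
    exact mulCompl_ne_zero (hm_pos k hk1 hkr.le) (hmr ▸ hm ⟨hk1, hkr.le⟩ ⟨hr, le_rfl⟩ hkr)
  have hIcc : Icc 1 (r - 1) = Ico 1 r := by
    rw [← Ico_add_one_right_eq_Icc, Nat.sub_add_cancel hr]
  change _ = _ / ∏ k ∈ Icc 1 (r - 1), mulCompl N (m k)
  rw [hc, hIcc, eq_div_iff hne, ← prod_mulCompl_Ico_one, mul_comm]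
  exact prod_mul_adjoint_eq hm hmr 1 le_rfl hr (hm_pos 1 le_rfl hr)

/-- The two-dimensional recursion for the constants `c_{j,l}`: with
`1 ≤ m_1 < ⋯ < m_r = N`, boundary values `c_{0,0} = 1`, `c_{j,0} = 0` for `j ≥ 1`,
`c_{0,l} = 0` for `l ≥ 1`, and
`c_{j+1,l} = -(m_l - j)(N - m_l - j) c_{j,l} + c_{j,l-1}`, one has
`c_{N,r} = (N-1)!² / ∏_{k=1}^{r-1} m_k (N - m_k)`. -/
theorem c_N_r_eq (N r : ℕ) (hN : 0 < N) (hr : 1 ≤ r) (m : ℕ → ℕ)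
    (hm1 : 1 ≤ m 1) (hmono : ∀ k l, 1 ≤ k → k < l → l ≤ r → m k < m l) (hmr : m r = N)
    (c : ℕ → ℕ → ℚ)
    (hc00 : c 0 0 = 1)
    (hcj0 : ∀ j, 1 ≤ j → c j 0 = 0)
    (hc0l : ∀ l, 1 ≤ l → l ≤ r → c 0 l = 0)
    (hrec : ∀ j l, 1 ≤ l → l ≤ r →
      c (j+1) l = -((m l : ℚ) - (j : ℚ)) * ((N : ℚ) - (m l : ℚ) - (j : ℚ)) * c j l
        + c j (l-1)) :
    c N r = ((Nat.factorial (N - 1) : ℚ))^2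
        / ∏ k ∈ Finset.Icc 1 (r - 1), ((m k : ℚ) * ((N : ℚ) - (m k : ℚ))) :=
  c_N_r_eq_general N r hr m hm1 hmono hmr c hc00 hcj0 hc0l hrec
end
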